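/- arXiv:1606.01371 — 13 statements merged into one kernel-verified Lean document; each statement's English description precedes it below -/
import Mathlib

section
/- Under a regular discrete choice model, for any optimal assortment S* and any revenue level r_i, the revenue of the revenue-ordered assortment S_i = {x ∈ C : r(x) ≥ r_i} satisfies ∑_{x∈S_i} P(x,S_i)·r(x) ≥ r_i · ∑_{x ∈ S* ∩ S_i} P(x,S*). -/
open Finset

theorem sum_inter_le_sum_of_regular {α : Type*} [DecidableEq α] (P : α → Finset α → ℝ)
    (h_reg : ∀ S S' : Finset α, S ⊆ S' → ∀ x ∈ S, P x S' ≤ P x S)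
    (h_reg0 : ∀ S S' : Finset α, S ⊆ S' →
      1 - ∑ x ∈ S', P x S' ≤ 1 - ∑ x ∈ S, P x S)
    (S T : Finset α) :
    ∑ x ∈ S ∩ T, P x S ≤ ∑ x ∈ T, P x T := by
  calc ∑ x ∈ S ∩ T, P x S
      ≤ ∑ x ∈ S ∩ T, P x (S ∩ T) :=
        sum_le_sum fun x hx => h_reg _ _ inter_subset_left x hx
    _ ≤ ∑ x ∈ T, P x T := by linarith [h_reg0 _ _ (inter_subset_right : S ∩ T ⊆ T)]

theorem mul_sum_le_sum_mul_of_le {α : Type*} (p r : α → ℝ) (T : Finset α) (t : ℝ)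
    (hp : ∀ x ∈ T, 0 ≤ p x) (ht : ∀ x ∈ T, t ≤ r x) :
    t * ∑ x ∈ T, p x ≤ ∑ x ∈ T, p x * r x := by
  rw [mul_sum]
  exact sum_le_sum fun x hx => by nlinarith [hp x hx, ht x hx]

open scoped Classical in
theorem stmt1_general {α : Type*} [Fintype α] [DecidableEq α]
    (P : α → Finset α → ℝ) (r : α → ℝ)
    (hr : ∀ x, 0 < r x)
    (h_nonneg : ∀ (x : α) (S : Finset α), 0 ≤ P x S)
    (h_reg : ∀ S S' : Finset α, S ⊆ S' → ∀ x ∈ S, P x S' ≤ P x S)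
    (h_reg0 : ∀ S S' : Finset α, S ⊆ S' →
      1 - ∑ x ∈ S', P x S' ≤ 1 - ∑ x ∈ S, P x S)
    (Sstar : Finset α) (ri : ℝ) :
    ri * ∑ x ∈ Sstar ∩ Finset.univ.filter (fun x => ri ≤ r x), P x Sstar ≤
      ∑ x ∈ Finset.univ.filter (fun x => ri ≤ r x),
        P x (Finset.univ.filter (fun x => ri ≤ r x)) * r x := by
  set Si := Finset.univ.filter (fun x => ri ≤ r x)
  rcases le_or_gt ri 0 with hri | hri
  · calc ri * ∑ x ∈ Sstar ∩ Si, P x Sstar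
        ≤ 0 := mul_nonpos_of_nonpos_of_nonneg hri (sum_nonneg fun x _ => h_nonneg x Sstar)
      _ ≤ ∑ x ∈ Si, P x Si * r x := sum_nonneg fun x _ => mul_nonneg (h_nonneg x Si) (hr x).le
  · calc ri * ∑ x ∈ Sstar ∩ Si, P x Sstar
        ≤ ri * ∑ x ∈ Si, P x Si :=
          mul_le_mul_of_nonneg_left (sum_inter_le_sum_of_regular P h_reg h_reg0 Sstar Si) hri.le
      _ ≤ ∑ x ∈ Si, P x Si * r x :=
          mul_sum_le_sum_mul_of_le _ r Si ri (fun x _ => h_nonneg x Si)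
            fun x hx => (mem_filter.mp hx).2

open scoped Classical in
/-- The technical bound: the revenue of the revenue-ordered assortment
`Sᵢ = {x : rᵢ ≤ r x}` is at least `rᵢ` times the probability mass that an
arbitrary (e.g. optimal) assortment `S*` puts on products of revenue at least `rᵢ`. -/
theorem stmt1 {α : Type*} [Fintype α] [DecidableEq α]
    (P : α → Finset α → ℝ) (r : α → ℝ)
    (hr : ∀ x, 0 < r x)
    (h_nonneg : ∀ (x : α) (S : Finset α), 0 ≤ P x S)
    (h_vanish : ∀ (x : α) (S : Finset α), x ∉ S → P x S = 0)
    (h_sum : ∀ S : Finset α, ∑ x ∈ S, P x S ≤ 1)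
    (h_reg : ∀ S S' : Finset α, S ⊆ S' → ∀ x ∈ S, P x S' ≤ P x S)
    (h_reg0 : ∀ S S' : Finset α, S ⊆ S' →
      1 - ∑ x ∈ S', P x S' ≤ 1 - ∑ x ∈ S, P x S)
    (Sstar : Finset α) (ri : ℝ) (hri : ∃ x : α, r x = ri) :
    ri * ∑ x ∈ Sstar ∩ Finset.univ.filter (fun x => ri ≤ r x), P x Sstar ≤
      ∑ x ∈ Finset.univ.filter (fun x => ri ≤ r x),
        P x (Finset.univ.filter (fun x => ri ≤ r x)) * r x :=
  stmt1_general P r hr h_nonneg h_reg h_reg0 Sstar ri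
end

section
/- Under a regular discrete choice model with k distinct product revenues, the revenue-ordered assortments strategy achieves revenue at least OPT/k; that is, max over i of the revenue of S_i = {x : r(x) ≥ r_i} is at least (1/k)·max over all S ⊆ C of ∑_{x∈S} P(x,S)r(x). -/
/-!
Split the revenue of `S` according to the `k` revenue values. The part coming from products of
revenue `w` is at most `w` times the probability of buying some product of revenue `≥ w` from `S`.
By regularity this probability only grows when `S` is first shrunk to its products of revenue
`≥ w` and then enlarged to the revenue-ordered assortment `{x | w ≤ r x}`, whose revenue is at
least `w` times its own purchase probability. So each of the `k` parts is bounded by the revenue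
of a revenue-ordered assortment, hence by the best one.
-/

open Finset

theorem Finset.exists_mem_sum_le_card_mul {ι : Type*} {s : Finset ι} (hs : s.Nonempty)
    (f : ι → ℝ) : ∃ i ∈ s, ∑ j ∈ s, f j ≤ #s * f i := by
  obtain ⟨i, hi, hmax⟩ := s.exists_max_image f hs
  exact ⟨i, hi, by simpa using s.sum_le_card_nsmul f (f i) hmax⟩

section ChoiceModel

variable {α : Type*} (P : α → Finset α → ℝ) (r : α → ℝ)

def revenue (S : Finset α) : ℝ := ∑ x ∈ S, P x S * r x

noncomputable def revenueOrdered [Fintype α] (w : ℝ) : Finset α := {x | w ≤ r x}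

variable {P r}

theorem sum_le_sum_of_regular
    (h_reg : ∀ S S' : Finset α, S ⊆ S' → ∀ x ∈ S, P x S' ≤ P x S)
    (h_reg0 : ∀ S S' : Finset α, S ⊆ S' →
      1 - ∑ x ∈ S', P x S' ≤ 1 - ∑ x ∈ S, P x S)
    {S T U : Finset α} (hTS : T ⊆ S) (hTU : T ⊆ U) :
    ∑ x ∈ T, P x S ≤ ∑ x ∈ U, P x U :=
  calc ∑ x ∈ T, P x S
      ≤ ∑ x ∈ T, P x T := sum_le_sum (h_reg T S hTS)
    _ ≤ ∑ x ∈ U, P x U := by linarith [h_reg0 T U hTU]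

theorem mul_sum_le_revenue (h_nonneg : ∀ (x : α) (S : Finset α), 0 ≤ P x S)
    {U : Finset α} {w : ℝ} (hw : ∀ x ∈ U, w ≤ r x) :
    w * ∑ x ∈ U, P x U ≤ revenue P r U := by
  rw [revenue, mul_sum]
  exact sum_le_sum fun x hx => by
    rw [mul_comm]; exact mul_le_mul_of_nonneg_left (hw x hx) (h_nonneg x U)

theorem sum_filter_eq_le_revenue_revenueOrdered [Fintype α]
    (h_nonneg : ∀ (x : α) (S : Finset α), 0 ≤ P x S)
    (h_reg : ∀ S S' : Finset α, S ⊆ S' → ∀ x ∈ S, P x S' ≤ P x S)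
    (h_reg0 : ∀ S S' : Finset α, S ⊆ S' →
      1 - ∑ x ∈ S', P x S' ≤ 1 - ∑ x ∈ S, P x S)
    (S : Finset α) {w : ℝ} (hw : 0 ≤ w) :
    ∑ x ∈ S with r x = w, P x S * r x ≤ revenue P r (revenueOrdered r w) := by
  have h_upper : {x ∈ S | w ≤ r x} ⊆ revenueOrdered r w := fun x hx => by
    simpa [revenueOrdered] using (mem_filter.mp hx).2
  calc ∑ x ∈ S with r x = w, P x S * r x
      = w * ∑ x ∈ S with r x = w, P x S := by
        rw [mul_sum]
        exact sum_congr rfl fun x hx => by rw [(mem_filter.mp hx).2, mul_comm]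
    _ ≤ w * ∑ x ∈ S with w ≤ r x, P x S := by
        gcongr
        · exact fun x _ _ => h_nonneg x S
        · exact Eq.ge
    _ ≤ w * ∑ x ∈ revenueOrdered r w, P x (revenueOrdered r w) := by
        gcongr
        exact sum_le_sum_of_regular h_reg h_reg0 (filter_subset _ S) h_upper
    _ ≤ revenue P r (revenueOrdered r w) :=
        mul_sum_le_revenue h_nonneg fun x hx => (mem_filter.mp hx).2

theorem revenue_le_sum_revenue_revenueOrdered [Fintype α] (hr : ∀ x, 0 < r x)
    (h_nonneg : ∀ (x : α) (S : Finset α), 0 ≤ P x S)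
    (h_reg : ∀ S S' : Finset α, S ⊆ S' → ∀ x ∈ S, P x S' ≤ P x S)
    (h_reg0 : ∀ S S' : Finset α, S ⊆ S' →
      1 - ∑ x ∈ S', P x S' ≤ 1 - ∑ x ∈ S, P x S)
    (S : Finset α) :
    revenue P r S ≤ ∑ w ∈ univ.image r, revenue P r (revenueOrdered r w) := by
  rw [revenue, ← sum_fiberwise_of_maps_to fun x _ => mem_image_of_mem r (mem_univ x)]
  refine sum_le_sum fun w hw => ?_
  obtain ⟨y, -, rfl⟩ := mem_image.mp hw
  exact sum_filter_eq_le_revenue_revenueOrdered h_nonneg h_reg h_reg0 S (hr y).le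

end ChoiceModel

open scoped Classical in
theorem stmt2_general {α : Type*} [Fintype α]
    (P : α → Finset α → ℝ) (r : α → ℝ)
    (hr : ∀ x, 0 < r x)
    (h_nonneg : ∀ (x : α) (S : Finset α), 0 ≤ P x S)
    (h_reg : ∀ S S' : Finset α, S ⊆ S' → ∀ x ∈ S, P x S' ≤ P x S)
    (h_reg0 : ∀ S S' : Finset α, S ⊆ S' →
      1 - ∑ x ∈ S', P x S' ≤ 1 - ∑ x ∈ S, P x S)
    (k : ℕ) (hk : 0 < k)
    (hcard : (Finset.univ.image r).card = k) :
    ∀ S : Finset α, ∃ v ∈ Finset.univ.image r,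
      ∑ x ∈ S, P x S * r x ≤
        (k : ℝ) * ∑ x ∈ Finset.univ.filter (fun x => v ≤ r x),
          P x (Finset.univ.filter (fun x => v ≤ r x)) * r x := by
  intro S
  have h_values : (univ.image r).Nonempty := by rw [← card_pos, hcard]; exact hk
  obtain ⟨v, hv, h_best⟩ :=
    exists_mem_sum_le_card_mul h_values fun w => revenue P r (revenueOrdered r w)
  refine ⟨v, hv, ?_⟩
  rw [← hcard]
  exact (revenue_le_sum_revenue_revenueOrdered hr h_nonneg h_reg h_reg0 S).trans h_best

open scoped Classical in
/-- Under a regular discrete choice model with `k` distinct revenues, some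
revenue-ordered assortment achieves at least `1/k` of the revenue of any assortment. -/
theorem stmt2 {α : Type*} [Fintype α] [DecidableEq α]
    (P : α → Finset α → ℝ) (r : α → ℝ)
    (hr : ∀ x, 0 < r x)
    (h_nonneg : ∀ (x : α) (S : Finset α), 0 ≤ P x S)
    (h_vanish : ∀ (x : α) (S : Finset α), x ∉ S → P x S = 0)
    (h_sum : ∀ S : Finset α, ∑ x ∈ S, P x S ≤ 1)
    (h_reg : ∀ S S' : Finset α, S ⊆ S' → ∀ x ∈ S, P x S' ≤ P x S)
    (h_reg0 : ∀ S S' : Finset α, S ⊆ S' →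
      1 - ∑ x ∈ S', P x S' ≤ 1 - ∑ x ∈ S, P x S)
    (k : ℕ) (hk : 0 < k)
    (hcard : (Finset.univ.image r).card = k) :
    ∀ S : Finset α, ∃ v ∈ Finset.univ.image r,
      ∑ x ∈ S, P x S * r x ≤
        (k : ℝ) * ∑ x ∈ Finset.univ.filter (fun x => v ≤ r x),
          P x (Finset.univ.filter (fun x => v ≤ r x)) * r x :=
  stmt2_general P r hr h_nonneg h_reg h_reg0 k hk hcard
end

section
/- Under a regular discrete choice model, let S* be an optimal assortment and for each i ∈ [k] define N_i = ∑_{x ∈ S*, r(x) ≥ r_i} P(x,S*). If N_1 > 0 and ℓ is the largest index with N_ℓ > 0, then the revenue of the best revenue-ordered assortment is at least OPT / (∑_{i=1}^{ℓ} (N_i − N_{i+1})/N_i) (with N_{ℓ+1} interpreted as N_{ℓ+1} if ℓ < k and 0 if ℓ = k), which is at least OPT/(1 + ln(N_1/N_ℓ)). -/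
/-!
Split the optimal revenue into layers: with `N j` the mass that `S*` puts on products of revenue
at least `r_j`, `OPT = ∑_{j ≤ ℓ} r_j (N_j - N_{j+1})`. Regularity shows that the revenue-ordered
assortment `S_j` sells with probability at least `N_j`: the products of `S* ∩ S_j` are chosen
from `S* ∩ S_j` at least as often as from `S*`, and the purchase probability only grows from
`S* ∩ S_j` to `S_j`. Since every product of `S_j` has revenue at least `r_j`, `S_j` earns at
least `r_j N_j`, so `OPT ≤ (∑_j (N_j - N_{j+1}) / N_j) · max_j R(S_j)`. Finally
`(N_j - N_{j+1}) / N_j ≤ log N_j - log N_{j+1}` telescopes to `log (N_1 / N_ℓ)`, and the last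
term, with `N_{ℓ+1} = 0`, contributes `1`.
-/

open Finset

section ChoiceModel

variable {α : Type*} (P : α → Finset α → ℝ) (r : α → ℝ)

variable {P r}

lemma revenue_nonneg (h_nonneg : ∀ x S, 0 ≤ P x S) (hr : ∀ x, 0 ≤ r x) (S : Finset α) :
    0 ≤ revenue P r S :=
  sum_nonneg fun x _ => mul_nonneg (h_nonneg x S) (hr x)

lemma sum_le_sum_of_subset_of_regular
    (h_reg : ∀ S S' : Finset α, S ⊆ S' → ∀ x ∈ S, P x S' ≤ P x S)
    (h_reg0 : ∀ S S' : Finset α, S ⊆ S' → 1 - ∑ x ∈ S', P x S' ≤ 1 - ∑ x ∈ S, P x S)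
    {B S T : Finset α} (hBS : B ⊆ S) (hBT : B ⊆ T) :
    ∑ x ∈ B, P x S ≤ ∑ x ∈ T, P x T :=
  calc ∑ x ∈ B, P x S ≤ ∑ x ∈ B, P x B := sum_le_sum fun x hx => h_reg B S hBS x hx
    _ ≤ ∑ x ∈ T, P x T := by linarith [h_reg0 B T hBT]

lemma mul_sum_le_revenue_s5 (h_nonneg : ∀ x S, 0 ≤ P x S)
    (h_reg : ∀ S S' : Finset α, S ⊆ S' → ∀ x ∈ S, P x S' ≤ P x S)
    (h_reg0 : ∀ S S' : Finset α, S ⊆ S' → 1 - ∑ x ∈ S', P x S' ≤ 1 - ∑ x ∈ S, P x S)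
    {B S T : Finset α} (hBS : B ⊆ S) (hBT : B ⊆ T) {t : ℝ} (ht : 0 ≤ t)
    (htT : ∀ x ∈ T, t ≤ r x) :
    t * ∑ x ∈ B, P x S ≤ revenue P r T :=
  calc t * ∑ x ∈ B, P x S ≤ t * ∑ x ∈ T, P x T :=
        mul_le_mul_of_nonneg_left (sum_le_sum_of_subset_of_regular h_reg h_reg0 hBS hBT) ht
    _ = ∑ x ∈ T, t * P x T := mul_sum _ _ _
    _ ≤ revenue P r T := sum_le_sum fun x hx => by
        rw [mul_comm]; exact mul_le_mul_of_nonneg_left (htT x hx) (h_nonneg x T)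

lemma mul_sum_filter_le_revenue_filter [Fintype α] (h_nonneg : ∀ x S, 0 ≤ P x S)
    (h_reg : ∀ S S' : Finset α, S ⊆ S' → ∀ x ∈ S, P x S' ≤ P x S)
    (h_reg0 : ∀ S S' : Finset α, S ⊆ S' → 1 - ∑ x ∈ S', P x S' ≤ 1 - ∑ x ∈ S, P x S)
    (S : Finset α) {t : ℝ} (ht : 0 ≤ t) :
    t * ∑ x ∈ S.filter (fun x => t ≤ r x), P x S ≤ revenue P r (univ.filter fun x => t ≤ r x) :=
  mul_sum_le_revenue_s5 h_nonneg h_reg h_reg0 (filter_subset _ _)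
    (fun _ hx => mem_filter.2 ⟨mem_univ _, (mem_filter.1 hx).2⟩) ht fun _ hx => (mem_filter.1 hx).2

end ChoiceModel

section TailMass

variable {α : Type*} (S : Finset α) (w : α → ℝ) (lvl : α → ℕ)

def tailMass (j : ℕ) : ℝ :=
  ∑ x ∈ S.filter (fun x => j ≤ lvl x), w x

variable {S w}

lemma tailMass_nonneg (hw : ∀ x ∈ S, 0 ≤ w x) (j : ℕ) : 0 ≤ tailMass S w lvl j :=
  sum_nonneg fun x hx => hw x (mem_filter.1 hx).1

lemma tailMass_antitone (hw : ∀ x ∈ S, 0 ≤ w x) : Antitone (tailMass S w lvl) :=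
  fun _ _ hij => sum_le_sum_of_subset_of_nonneg
    (monotone_filter_right S fun _ _ h => hij.trans h)
    fun x hx _ => hw x (mem_filter.1 hx).1

lemma tailMass_sub_tailMass_succ (j : ℕ) :
    tailMass S w lvl j - tailMass S w lvl (j + 1) = ∑ x ∈ S.filter (fun x => lvl x = j), w x := by
  simp only [tailMass, sum_filter, ← sum_sub_distrib]
  refine sum_congr rfl fun x _ => ?_
  split_ifs <;> first | omega | ring

lemma sum_mul_eq_sum_Icc_mul_tailMass_sub (hw : ∀ x ∈ S, 0 ≤ w x) {a b : ℕ}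
    (ha : ∀ x ∈ S, a ≤ lvl x) (hb : tailMass S w lvl (b + 1) = 0) (g : ℕ → ℝ) :
    ∑ x ∈ S, w x * g (lvl x) =
      ∑ j ∈ Icc a b, g j * (tailMass S w lvl j - tailMass S w lvl (j + 1)) := by
  have hvanish : ∀ x ∈ S, b < lvl x → w x = 0 := fun x hx hlt =>
    (sum_eq_zero_iff_of_nonneg fun y hy => hw y (mem_filter.1 hy).1).1 hb x
      (mem_filter.2 ⟨hx, hlt⟩)
  calc ∑ x ∈ S, w x * g (lvl x) = ∑ x ∈ S with lvl x ∈ Icc a b, w x * g (lvl x) :=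
        (sum_filter_of_ne fun x hx hne => mem_Icc.2 ⟨ha x hx, not_lt.1 fun hlt => hne <| by
          rw [hvanish x hx hlt, zero_mul]⟩).symm
    _ = ∑ j ∈ Icc a b, ∑ x ∈ S with lvl x = j, w x * g (lvl x) :=
        (sum_fiberwise_eq_sum_filter _ _ _ _).symm
    _ = _ := sum_congr rfl fun j _ => by
        rw [tailMass_sub_tailMass_succ, mul_sum]
        exact sum_congr rfl fun x hx => by rw [(mem_filter.1 hx).2, mul_comm]

end TailMass

lemma ite_sum_filter_le_eq_tailMass {α : Type*} {r : α → ℝ} {v : ℕ → ℝ} {k : ℕ}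
    {lvl : α → ℕ} (hv : StrictMonoOn v (Set.Icc 1 k)) (hlvl : ∀ x, lvl x ∈ Icc 1 k)
    (hrlvl : ∀ x, v (lvl x) = r x) (S : Finset α) (w : α → ℝ) {j : ℕ} (hj : 1 ≤ j) :
    (if j ≤ k then ∑ x ∈ S.filter (fun x => v j ≤ r x), w x else 0) = tailMass S w lvl j := by
  split_ifs with hjk
  · refine sum_congr (filter_congr fun x _ => ?_) fun _ _ => rfl
    rw [← hrlvl x]
    exact hv.le_iff_le ⟨hj, hjk⟩ (by simpa using hlvl x)
  · refine (sum_eq_zero fun x hx => ?_).symm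
    have := (mem_Icc.1 (hlvl x)).2
    have := (mem_filter.1 hx).2
    omega

lemma sum_mul_sub_le_sum_sub_div_mul {ι : Type*} {s : Finset ι} {v N N' R : ι → ℝ} {M : ℝ}
    (hN : ∀ j ∈ s, 0 < N j) (hN' : ∀ j ∈ s, N' j ≤ N j) (hR : ∀ j ∈ s, v j * N j ≤ R j)
    (hM : ∀ j ∈ s, R j ≤ M) :
    ∑ j ∈ s, v j * (N j - N' j) ≤ (∑ j ∈ s, (N j - N' j) / N j) * M := by
  rw [sum_mul]
  refine sum_le_sum fun j hj => ?_
  have hNj := (hN j hj).ne'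
  calc v j * (N j - N' j) = (N j - N' j) / N j * (v j * N j) := by field_simp
    _ ≤ (N j - N' j) / N j * M := mul_le_mul_of_nonneg_left ((hR j hj).trans (hM j hj))
        (div_nonneg (sub_nonneg.2 (hN' j hj)) (hN j hj).le)

lemma sub_div_le_log_sub_log {x y : ℝ} (hx : 0 < x) (hy : 0 < y) :
    (x - y) / x ≤ Real.log x - Real.log y := by
  have := Real.log_le_sub_one_of_pos (div_pos hy hx)
  rw [Real.log_div hy.ne' hx.ne', div_sub_one hx.ne'] at this
  rw [← neg_sub y x, neg_div]
  linarith

lemma sum_Ico_sub_div_le_log {N : ℕ → ℝ} {a b : ℕ} (hab : a ≤ b)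
    (hN : ∀ j ∈ Icc a b, 0 < N j) :
    ∑ j ∈ Ico a b, (N j - N (j + 1)) / N j ≤ Real.log (N a) - Real.log (N b) := by
  have htel := sum_Ico_sub (fun j => Real.log (N j)) hab
  calc ∑ j ∈ Ico a b, (N j - N (j + 1)) / N j
      ≤ ∑ j ∈ Ico a b, (Real.log (N j) - Real.log (N (j + 1))) :=
        sum_le_sum fun j hj => by
          obtain ⟨haj, hjb⟩ := mem_Ico.1 hj
          exact sub_div_le_log_sub_log (hN j (mem_Icc.2 ⟨haj, hjb.le⟩))
            (hN (j + 1) (mem_Icc.2 ⟨by omega, hjb⟩))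
    _ = Real.log (N a) - Real.log (N b) := by
        rw [← neg_sub, ← htel, ← sum_neg_distrib]
        simp only [neg_sub]

lemma sum_Icc_sub_div_le_one_add_log {N : ℕ → ℝ} {a b : ℕ} (hab : a ≤ b)
    (hN : ∀ j ∈ Icc a b, 0 < N j) (hb : N (b + 1) = 0) :
    ∑ j ∈ Icc a b, (N j - N (j + 1)) / N j ≤ 1 + Real.log (N a / N b) := by
  have hNa := hN a (mem_Icc.2 ⟨le_rfl, hab⟩)
  have hNb := hN b (mem_Icc.2 ⟨hab, le_rfl⟩)
  rw [← Ico_add_one_right_eq_Icc, sum_Ico_succ_top hab, hb, sub_zero, div_self hNb.ne',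
    Real.log_div hNa.ne' hNb.ne']
  linarith [sum_Ico_sub_div_le_log hab hN]

lemma exists_le_sum_sub_div_mul_and_le_one_add_log_mul {v N R : ℕ → ℝ} {ℓ : ℕ} {OPT : ℝ}
    (hℓ : 1 ≤ ℓ) (hOPT : OPT = ∑ j ∈ Icc 1 ℓ, v j * (N j - N (j + 1)))
    (hN : AntitoneOn N (Set.Icc 1 (ℓ + 1))) (hNℓ : 0 < N ℓ) (hNℓ1 : N (ℓ + 1) = 0)
    (hR : ∀ j ∈ Icc 1 ℓ, v j * N j ≤ R j) (hR0 : ∀ j, 0 ≤ R j) :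
    ∃ i ∈ Icc 1 ℓ, OPT ≤ (∑ j ∈ Icc 1 ℓ, (N j - N (j + 1)) / N j) * R i ∧
      OPT ≤ (1 + Real.log (N 1 / N ℓ)) * R i := by
  have hpos : ∀ j ∈ Icc 1 ℓ, 0 < N j := fun j hj => by
    obtain ⟨h1, hjℓ⟩ := mem_Icc.1 hj
    exact hNℓ.trans_le (hN ⟨h1, by omega⟩ ⟨hℓ, by omega⟩ hjℓ)
  have hsucc : ∀ j ∈ Icc 1 ℓ, N (j + 1) ≤ N j := fun j hj => by
    obtain ⟨h1, hjℓ⟩ := mem_Icc.1 hj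
    exact hN ⟨h1, by omega⟩ ⟨by omega, by omega⟩ (Nat.le_succ j)
  obtain ⟨i, hi, himax⟩ := exists_max_image (Icc 1 ℓ) R ⟨1, mem_Icc.2 ⟨le_rfl, hℓ⟩⟩
  have hmain := hOPT ▸ sum_mul_sub_le_sum_sub_div_mul hpos hsucc hR himax
  exact ⟨i, hi, hmain, hmain.trans <|
    mul_le_mul_of_nonneg_right (sum_Icc_sub_div_le_one_add_log hℓ hpos hNℓ1) (hR0 i)⟩

open scoped Classical in
theorem stmt5_general {α : Type*} [Fintype α]
    (P : α → Finset α → ℝ) (r : α → ℝ)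
    (hr : ∀ x, 0 < r x)
    (h_nonneg : ∀ (x : α) (S : Finset α), 0 ≤ P x S)
    (h_reg : ∀ S S' : Finset α, S ⊆ S' → ∀ x ∈ S, P x S' ≤ P x S)
    (h_reg0 : ∀ S S' : Finset α, S ⊆ S' →
      1 - ∑ x ∈ S', P x S' ≤ 1 - ∑ x ∈ S, P x S)
    (k : ℕ) (rv : ℕ → ℝ)
    (hrvmono : ∀ i j, 1 ≤ i → i < j → j ≤ k → rv i < rv j)
    (hvals : Finset.univ.image r = (Finset.Icc 1 k).image rv)
    (Sstar : Finset α)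
    (N : ℕ → ℝ)
    (hN : ∀ i, N i =
      if i ≤ k then ∑ x ∈ Sstar.filter (fun x => rv i ≤ r x), P x Sstar else 0)
    (ℓ : ℕ) (hℓmem : ℓ ∈ Finset.Icc 1 k)
    (hNℓ : 0 < N ℓ)
    (hℓmax : ∀ i ∈ Finset.Icc 1 k, 0 < N i → i ≤ ℓ) :
    ∃ i ∈ Finset.Icc 1 k,
      (∑ x ∈ Sstar, P x Sstar * r x ≤
        (∑ j ∈ Finset.Icc 1 ℓ, (N j - N (j + 1)) / N j) *
          ∑ x ∈ Finset.univ.filter (fun x => rv i ≤ r x),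
            P x (Finset.univ.filter (fun x => rv i ≤ r x)) * r x) ∧
      (∑ x ∈ Sstar, P x Sstar * r x ≤
        (1 + Real.log (N 1 / N ℓ)) *
          ∑ x ∈ Finset.univ.filter (fun x => rv i ≤ r x),
            P x (Finset.univ.filter (fun x => rv i ≤ r x)) * r x) := by
  obtain ⟨hℓ1, hℓk⟩ := mem_Icc.1 hℓmem
  have hv : StrictMonoOn rv (Set.Icc 1 k) := fun i hi j hj hij => hrvmono i j hi.1 hij hj.2
  choose lvl hlvl hrlvl using fun x => mem_image.1 (hvals ▸ mem_image_of_mem r (mem_univ x))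
  have hw : ∀ x ∈ Sstar, 0 ≤ P x Sstar := fun x _ => h_nonneg x Sstar
  have hNT : ∀ j, 1 ≤ j → N j = tailMass Sstar (P · Sstar) lvl j := fun j hj =>
    (hN j).trans (ite_sum_filter_le_eq_tailMass hv hlvl hrlvl Sstar _ hj)
  have hNℓ1 : N (ℓ + 1) = 0 := by
    refine le_antisymm (not_lt.1 fun hpos => ?_)
      (hNT (ℓ + 1) (by omega) ▸ tailMass_nonneg lvl hw _)
    by_cases h : ℓ + 1 ≤ k
    · have := hℓmax _ (mem_Icc.2 ⟨by omega, h⟩) hpos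
      omega
    · simp [hN, h] at hpos
  have hOPT : ∑ x ∈ Sstar, P x Sstar * r x = ∑ j ∈ Icc 1 ℓ, rv j * (N j - N (j + 1)) := by
    calc ∑ x ∈ Sstar, P x Sstar * r x = ∑ x ∈ Sstar, P x Sstar * rv (lvl x) := by simp only [hrlvl]
      _ = _ := sum_mul_eq_sum_Icc_mul_tailMass_sub lvl hw (fun x _ => (mem_Icc.1 (hlvl x)).1)
            (hNT (ℓ + 1) (by omega) ▸ hNℓ1) rv
      _ = _ := sum_congr rfl fun j hj => by rw [hNT j (mem_Icc.1 hj).1, hNT (j + 1) (by omega)]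
  have hNanti : AntitoneOn N (Set.Icc 1 (ℓ + 1)) := fun i hi j hj hij => by
    rw [hNT i hi.1, hNT j hj.1]
    exact tailMass_antitone lvl hw hij
  have hA : ∀ j ∈ Icc 1 ℓ, rv j * N j ≤ revenue P r (univ.filter fun x => rv j ≤ r x) :=
    fun j hj => by
      have hjk := Icc_subset_Icc_right hℓk hj
      obtain ⟨x, -, hx⟩ := mem_image.1 (hvals.symm ▸ mem_image_of_mem rv hjk)
      rw [hN, if_pos (mem_Icc.1 hjk).2]
      exact mul_sum_filter_le_revenue_filter h_nonneg h_reg h_reg0 Sstar (hx ▸ (hr x).le)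
  obtain ⟨i, hi, hbound⟩ := exists_le_sum_sub_div_mul_and_le_one_add_log_mul hℓ1 hOPT hNanti hNℓ
    hNℓ1 hA fun j => revenue_nonneg h_nonneg (fun x => (hr x).le) _
  exact ⟨i, Icc_subset_Icc_right hℓk hi, hbound⟩

open scoped Classical in
/-- Under a regular discrete choice model, with `S*` an optimal assortment,
`N i` the probability mass that `S*` puts on products of revenue at least `rv i`
(and `N i = 0` for `i > k`), `N 1 > 0`, and `ℓ` the largest index in `[k]` with
`N ℓ > 0`, some revenue-ordered assortment achieves revenue at least
`OPT / ∑_{i=1}^ℓ (Nᵢ − N_{i+1})/Nᵢ`, hence at least `OPT / (1 + ln (N 1 / N ℓ))`. -/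
theorem stmt5 {α : Type*} [Fintype α] [DecidableEq α]
    (P : α → Finset α → ℝ) (r : α → ℝ)
    (hr : ∀ x, 0 < r x)
    (h_nonneg : ∀ (x : α) (S : Finset α), 0 ≤ P x S)
    (h_vanish : ∀ (x : α) (S : Finset α), x ∉ S → P x S = 0)
    (h_sum : ∀ S : Finset α, ∑ x ∈ S, P x S ≤ 1)
    (h_reg : ∀ S S' : Finset α, S ⊆ S' → ∀ x ∈ S, P x S' ≤ P x S)
    (h_reg0 : ∀ S S' : Finset α, S ⊆ S' →
      1 - ∑ x ∈ S', P x S' ≤ 1 - ∑ x ∈ S, P x S)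
    (k : ℕ) (hk : 1 ≤ k) (rv : ℕ → ℝ)
    (hrvmono : ∀ i j, 1 ≤ i → i < j → j ≤ k → rv i < rv j)
    (hvals : Finset.univ.image r = (Finset.Icc 1 k).image rv)
    (Sstar : Finset α)
    (hopt : ∀ S : Finset α, ∑ x ∈ S, P x S * r x ≤ ∑ x ∈ Sstar, P x Sstar * r x)
    (N : ℕ → ℝ)
    (hN : ∀ i, N i =
      if i ≤ k then ∑ x ∈ Sstar.filter (fun x => rv i ≤ r x), P x Sstar else 0)
    (ℓ : ℕ) (hℓmem : ℓ ∈ Finset.Icc 1 k)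
    (hN1 : 0 < N 1) (hNℓ : 0 < N ℓ)
    (hℓmax : ∀ i ∈ Finset.Icc 1 k, 0 < N i → i ≤ ℓ) :
    ∃ i ∈ Finset.Icc 1 k,
      (∑ x ∈ Sstar, P x Sstar * r x ≤
        (∑ j ∈ Finset.Icc 1 ℓ, (N j - N (j + 1)) / N j) *
          ∑ x ∈ Finset.univ.filter (fun x => rv i ≤ r x),
            P x (Finset.univ.filter (fun x => rv i ≤ r x)) * r x) ∧
      (∑ x ∈ Sstar, P x Sstar * r x ≤
        (1 + Real.log (N 1 / N ℓ)) *
          ∑ x ∈ Finset.univ.filter (fun x => rv i ≤ r x),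
            P x (Finset.univ.filter (fun x => rv i ≤ r x)) * r x) :=
  stmt5_general P r hr h_nonneg h_reg h_reg0 k rv hrvmono hvals Sstar N hN ℓ hℓmem hNℓ hℓmax
end

section
/- Under a regular discrete choice model, for every i ∈ [k] and every optimal assortment S*, the quantity N_i·r_i, where N_i = ∑_{x ∈ S*, r(x) ≥ r_i} P(x,S*), is at most the revenue of the best revenue-ordered assortment: N_i r_i ≤ max_j ∑_{x∈S_j} P(x,S_j) r(x). -/
/-! Regularity bounds the mass that `S*` puts on products of revenue at least `t` by the
purchase probability of those products offered alone, and, since the no-purchase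
probability can only drop as the offer grows, by the purchase probability of the whole
revenue-ordered assortment `{x | t ≤ r x}`. Every product there earns at least `t`. -/

open Finset

section Regular

variable {α : Type*} (P : α → Finset α → ℝ)

theorem sum_le_sum_restrict_of_regular
    (h_reg : ∀ S S' : Finset α, S ⊆ S' → ∀ x ∈ S, P x S' ≤ P x S)
    {T S : Finset α} (hTS : T ⊆ S) :
    ∑ x ∈ T, P x S ≤ ∑ x ∈ T, P x T :=
  sum_le_sum fun x hx => h_reg T S hTS x hx

theorem purchase_mass_mono
    (h_reg0 : ∀ S S' : Finset α, S ⊆ S' →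
      1 - ∑ x ∈ S', P x S' ≤ 1 - ∑ x ∈ S, P x S)
    {T S : Finset α} (hTS : T ⊆ S) :
    ∑ x ∈ T, P x T ≤ ∑ x ∈ S, P x S := by
  linarith [h_reg0 T S hTS]

theorem purchase_mass_mul_le_revenue (r : α → ℝ)
    (h_nonneg : ∀ (x : α) (S : Finset α), 0 ≤ P x S)
    {S : Finset α} {t : ℝ} (ht : ∀ x ∈ S, t ≤ r x) :
    (∑ x ∈ S, P x S) * t ≤ ∑ x ∈ S, P x S * r x := by
  rw [sum_mul]
  exact sum_le_sum fun x hx => mul_le_mul_of_nonneg_left (ht x hx) (h_nonneg x S)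

theorem upper_mass_mul_le_revenue_ordered [Fintype α] (r : α → ℝ)
    (h_nonneg : ∀ (x : α) (S : Finset α), 0 ≤ P x S)
    (h_reg : ∀ S S' : Finset α, S ⊆ S' → ∀ x ∈ S, P x S' ≤ P x S)
    (h_reg0 : ∀ S S' : Finset α, S ⊆ S' →
      1 - ∑ x ∈ S', P x S' ≤ 1 - ∑ x ∈ S, P x S)
    (S : Finset α) {t : ℝ} (ht : 0 ≤ t) :
    (∑ x ∈ S.filter (fun x => t ≤ r x), P x S) * t ≤
      ∑ x ∈ univ.filter (fun x => t ≤ r x), P x (univ.filter (fun x => t ≤ r x)) * r x := by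
  set T := S.filter (fun x => t ≤ r x)
  set St := univ.filter (fun x => t ≤ r x)
  have hTSt : T ⊆ St := fun x hx => mem_filter.mpr ⟨mem_univ x, (mem_filter.mp hx).2⟩
  have hmass : ∑ x ∈ T, P x S ≤ ∑ x ∈ St, P x St :=
    (sum_le_sum_restrict_of_regular P h_reg (filter_subset _ S)).trans
      (purchase_mass_mono P h_reg0 hTSt)
  calc (∑ x ∈ T, P x S) * t ≤ (∑ x ∈ St, P x St) * t :=
        mul_le_mul_of_nonneg_right hmass ht
    _ ≤ ∑ x ∈ St, P x St * r x :=
        purchase_mass_mul_le_revenue P r h_nonneg fun x hx => (mem_filter.mp hx).2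

end Regular

open scoped Classical in
theorem stmt6_general {α : Type*} [Fintype α]
    (P : α → Finset α → ℝ) (r : α → ℝ)
    (hr : ∀ x, 0 < r x)
    (h_nonneg : ∀ (x : α) (S : Finset α), 0 ≤ P x S)
    (h_reg : ∀ S S' : Finset α, S ⊆ S' → ∀ x ∈ S, P x S' ≤ P x S)
    (h_reg0 : ∀ S S' : Finset α, S ⊆ S' →
      1 - ∑ x ∈ S', P x S' ≤ 1 - ∑ x ∈ S, P x S)
    (k : ℕ) (rv : ℕ → ℝ)
    (hvals : Finset.univ.image r = (Finset.Icc 1 k).image rv)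
    (Sstar : Finset α) :
    ∀ i ∈ Finset.Icc 1 k, ∃ j ∈ Finset.Icc 1 k,
      (∑ x ∈ Sstar.filter (fun x => rv i ≤ r x), P x Sstar) * rv i ≤
        ∑ x ∈ Finset.univ.filter (fun x => rv j ≤ r x),
          P x (Finset.univ.filter (fun x => rv j ≤ r x)) * r x := by
  intro i hi
  obtain ⟨x, -, hx⟩ := mem_image.mp (hvals ▸ mem_image_of_mem rv hi)
  exact ⟨i, hi, upper_mass_mul_le_revenue_ordered P r h_nonneg h_reg h_reg0 Sstar
    (hx ▸ (hr x).le)⟩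

open scoped Classical in
/-- Under a regular discrete choice model with optimal assortment `S*`, for every
revenue level `rv i`, the quantity `Nᵢ · rvᵢ`, where `Nᵢ` is the probability mass
that `S*` puts on products of revenue at least `rv i`, is at most the revenue of
the best revenue-ordered assortment. -/
theorem stmt6 {α : Type*} [Fintype α] [DecidableEq α]
    (P : α → Finset α → ℝ) (r : α → ℝ)
    (hr : ∀ x, 0 < r x)
    (h_nonneg : ∀ (x : α) (S : Finset α), 0 ≤ P x S)
    (h_vanish : ∀ (x : α) (S : Finset α), x ∉ S → P x S = 0)
    (h_sum : ∀ S : Finset α, ∑ x ∈ S, P x S ≤ 1)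
    (h_reg : ∀ S S' : Finset α, S ⊆ S' → ∀ x ∈ S, P x S' ≤ P x S)
    (h_reg0 : ∀ S S' : Finset α, S ⊆ S' →
      1 - ∑ x ∈ S', P x S' ≤ 1 - ∑ x ∈ S, P x S)
    (k : ℕ) (hk : 1 ≤ k) (rv : ℕ → ℝ)
    (hrvmono : ∀ i j, 1 ≤ i → i < j → j ≤ k → rv i < rv j)
    (hvals : Finset.univ.image r = (Finset.Icc 1 k).image rv)
    (Sstar : Finset α)
    (hopt : ∀ S : Finset α, ∑ x ∈ S, P x S * r x ≤ ∑ x ∈ Sstar, P x Sstar * r x) :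
    ∀ i ∈ Finset.Icc 1 k, ∃ j ∈ Finset.Icc 1 k,
      (∑ x ∈ Sstar.filter (fun x => rv i ≤ r x), P x Sstar) * rv i ≤
        ∑ x ∈ Finset.univ.filter (fun x => rv j ≤ r x),
          P x (Finset.univ.filter (fun x => rv j ≤ r x)) * r x :=
  stmt6_general P r hr h_nonneg h_reg h_reg0 k rv hvals Sstar
end

section
/- For every integer k ≥ 1 and every ε with 0 < ε ≤ 1/2, the following defines a regular discrete choice model: the product set is C = {(i,j) : i ∈ [k], j ∈ [i]}, and for S ⊆ C and (i,j) ∈ S, P((i,j),S) = ε^i if no (i,j') with j' < j belongs to S, and 0 otherwise; i.e., P satisfies nonnegativity, P(x,S)=0 for x ∉ S, ∑_{x∈S}P(x,S) ≤ 1, and the regularity axiom P(x,S) ≥ P(x,S') for all S ⊆ S' and x ∈ S ∪ {0}, where P(0,S) = 1 − ∑_{x∈S}P(x,S). -/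
open Finset

/-!
Within each row `i` only the leftmost offered product `(i, j)` is chosen, with weight `w i`. So the
total purchase probability of `S` is the sum of `w i` over the rows that `S` meets: it grows with `S`
(regularity of the no-purchase option) and, for `w i = ε ^ i` with `ε ≤ 1/2`, is bounded by the
geometric series `∑_{i ≥ 1} ε ^ i ≤ 1`. A product that is leftmost in its row of `S'` is leftmost in
its row of any `S ⊆ S'`, which gives regularity for the products.
-/

section FirstInRow

variable {α β : Type*} [DecidableEq α] [LinearOrder β]

def firstInRow (w : α → ℝ) (p : α × β) (S : Finset (α × β)) : ℝ :=
  if p ∈ S ∧ ∀ q ∈ S, q.1 = p.1 → p.2 ≤ q.2 then w p.1 else 0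

variable {w : α → ℝ}

lemma firstInRow_nonneg (hw : ∀ i, 0 ≤ w i) (p : α × β) (S : Finset (α × β)) :
    0 ≤ firstInRow w p S := by
  unfold firstInRow
  split_ifs
  exacts [hw p.1, le_rfl]

lemma firstInRow_of_notMem {p : α × β} {S : Finset (α × β)} (hp : p ∉ S) :
    firstInRow w p S = 0 :=
  if_neg fun h => hp h.1

lemma firstInRow_anti (hw : ∀ i, 0 ≤ w i) {S S' : Finset (α × β)} (hSS' : S ⊆ S')
    {p : α × β} (hp : p ∈ S) : firstInRow w p S' ≤ firstInRow w p S := by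
  unfold firstInRow
  by_cases h : p ∈ S' ∧ ∀ q ∈ S', q.1 = p.1 → p.2 ≤ q.2
  · rw [if_pos h, if_pos ⟨hp, fun q hq => h.2 q (hSS' hq)⟩]
  · rw [if_neg h]
    exact firstInRow_nonneg hw p S

lemma image_fst_filter_firstInRow (S : Finset (α × β)) :
    (S.filter fun p => p ∈ S ∧ ∀ q ∈ S, q.1 = p.1 → p.2 ≤ q.2).image Prod.fst = S.image Prod.fst := by
  refine (image_subset_image (filter_subset _ _)).antisymm fun i hi => ?_
  obtain ⟨p₀, hp₀, rfl⟩ := mem_image.mp hi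
  obtain ⟨m, hm, hmin⟩ := exists_min_image (S.filter fun q => q.1 = p₀.1) Prod.snd
    ⟨p₀, mem_filter.mpr ⟨hp₀, rfl⟩⟩
  obtain ⟨hmS, hm₁⟩ := mem_filter.mp hm
  refine mem_image.mpr ⟨m, mem_filter.mpr ⟨hmS, hmS, fun q hq hq₁ => ?_⟩, hm₁⟩
  exact hmin q (mem_filter.mpr ⟨hq, hq₁.trans hm₁⟩)

lemma sum_firstInRow (S : Finset (α × β)) :
    ∑ p ∈ S, firstInRow w p S = ∑ i ∈ S.image Prod.fst, w i := by
  have hinj : Set.InjOn Prod.fst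
      (S.filter fun p => p ∈ S ∧ ∀ q ∈ S, q.1 = p.1 → p.2 ≤ q.2 : Set (α × β)) := by
    intro p hp q hq hpq
    obtain ⟨-, hpS, hp⟩ := mem_filter.mp hp
    obtain ⟨-, hqS, hq⟩ := mem_filter.mp hq
    exact Prod.ext hpq ((hp q hqS hpq.symm).antisymm (hq p hpS hpq))
  rw [← image_fst_filter_firstInRow, sum_image hinj, sum_filter]
  rfl

lemma sum_firstInRow_mono (hw : ∀ i, 0 ≤ w i) {S S' : Finset (α × β)} (hSS' : S ⊆ S') :
    ∑ p ∈ S, firstInRow w p S ≤ ∑ p ∈ S', firstInRow w p S' := by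
  rw [sum_firstInRow, sum_firstInRow]
  exact sum_le_sum_of_subset_of_nonneg (image_subset_image hSS') fun i _ _ => hw i

lemma sum_firstInRow_le (hw : ∀ i, 0 ≤ w i) {S : Finset (α × β)} {T : Finset α}
    (hST : S.image Prod.fst ⊆ T) : ∑ p ∈ S, firstInRow w p S ≤ ∑ i ∈ T, w i := by
  rw [sum_firstInRow]
  exact sum_le_sum_of_subset_of_nonneg hST fun i _ _ => hw i

end FirstInRow

lemma sum_Icc_one_pow_le_one {ε : ℝ} (hε0 : 0 ≤ ε) (hε : ε ≤ 1 / 2) (k : ℕ) :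
    ∑ i ∈ Icc 1 k, ε ^ i ≤ 1 := by
  have hε1 : 0 < 1 - ε := by linarith
  calc ∑ i ∈ Icc 1 k, ε ^ i = ∑ i ∈ Ico 1 (k + 1), ε ^ i := by rw [Ico_add_one_right_eq_Icc]
    _ ≤ ε ^ 1 / (1 - ε) := geom_sum_Ico_le_of_lt_one hε0 (by linarith)
    _ ≤ 1 := by rw [pow_one, div_le_one hε1]; linarith

theorem stmt7_general (k : ℕ) (ε : ℝ) (hε0 : 0 < ε) (hε : ε ≤ 1 / 2)
    (P : ℕ × ℕ → Finset (ℕ × ℕ) → ℝ)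
    (hP : ∀ (p : ℕ × ℕ) (S : Finset (ℕ × ℕ)),
      P p S = if p ∈ S ∧ ∀ q ∈ S, q.1 = p.1 → p.2 ≤ q.2 then ε ^ p.1 else 0) :
    (∀ (p : ℕ × ℕ) (S : Finset (ℕ × ℕ)), 0 ≤ P p S) ∧
    (∀ (p : ℕ × ℕ) (S : Finset (ℕ × ℕ)), p ∉ S → P p S = 0) ∧
    (∀ S ⊆ (Finset.Icc 1 k ×ˢ Finset.Icc 1 k).filter (fun p => p.2 ≤ p.1),
      ∑ p ∈ S, P p S ≤ 1) ∧
    (∀ S S' : Finset (ℕ × ℕ), S ⊆ S' →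
      S' ⊆ (Finset.Icc 1 k ×ˢ Finset.Icc 1 k).filter (fun p => p.2 ≤ p.1) →
      ∀ p ∈ S, P p S' ≤ P p S) ∧
    (∀ S S' : Finset (ℕ × ℕ), S ⊆ S' →
      S' ⊆ (Finset.Icc 1 k ×ˢ Finset.Icc 1 k).filter (fun p => p.2 ≤ p.1) →
      1 - ∑ p ∈ S', P p S' ≤ 1 - ∑ p ∈ S, P p S) := by
  obtain rfl : P = firstInRow (ε ^ ·) := funext₂ hP
  have hw : ∀ i, 0 ≤ ε ^ i := fun i => pow_nonneg hε0.le i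
  refine ⟨firstInRow_nonneg hw, fun p S => firstInRow_of_notMem, fun S hS => ?_,
    fun S S' hSS' _ p hp => firstInRow_anti hw hSS' hp,
    fun S S' hSS' _ => sub_le_sub_left (sum_firstInRow_mono hw hSS') 1⟩
  refine (sum_firstInRow_le hw fun i hi => ?_).trans (sum_Icc_one_pow_le_one hε0.le hε k)
  obtain ⟨p, hp, rfl⟩ := mem_image.mp hi
  exact (mem_product.mp (mem_filter.mp (hS hp)).1).1

/-- The tight-example construction: products are pairs `(i,j)` with `1 ≤ j ≤ i ≤ k`,
and `P((i,j),S) = ε^i` if `(i,j) ∈ S` and no `(i,j')` with `j' < j` lies in `S`,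
and `0` otherwise. This `P` is a regular discrete choice model: it is nonnegative,
vanishes outside the offered set, sums to at most `1`, and satisfies the regularity
axiom for both products and the no-purchase option. -/
theorem stmt7 (k : ℕ) (hk : 1 ≤ k) (ε : ℝ) (hε0 : 0 < ε) (hε : ε ≤ 1 / 2)
    (P : ℕ × ℕ → Finset (ℕ × ℕ) → ℝ)
    (hP : ∀ (p : ℕ × ℕ) (S : Finset (ℕ × ℕ)),
      P p S = if p ∈ S ∧ ∀ q ∈ S, q.1 = p.1 → p.2 ≤ q.2 then ε ^ p.1 else 0) :
    (∀ (p : ℕ × ℕ) (S : Finset (ℕ × ℕ)), 0 ≤ P p S) ∧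
    (∀ (p : ℕ × ℕ) (S : Finset (ℕ × ℕ)), p ∉ S → P p S = 0) ∧
    (∀ S ⊆ (Finset.Icc 1 k ×ˢ Finset.Icc 1 k).filter (fun p => p.2 ≤ p.1),
      ∑ p ∈ S, P p S ≤ 1) ∧
    (∀ S S' : Finset (ℕ × ℕ), S ⊆ S' →
      S' ⊆ (Finset.Icc 1 k ×ˢ Finset.Icc 1 k).filter (fun p => p.2 ≤ p.1) →
      ∀ p ∈ S, P p S' ≤ P p S) ∧
    (∀ S S' : Finset (ℕ × ℕ), S ⊆ S' →
      S' ⊆ (Finset.Icc 1 k ×ˢ Finset.Icc 1 k).filter (fun p => p.2 ≤ p.1) →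
      1 - ∑ p ∈ S', P p S' ≤ 1 - ∑ p ∈ S, P p S) :=
  stmt7_general k ε hε0 hε P hP
end

section
/- In any RUM, the demand function f(S) = ∑_{x∈S} P(x,S) is submodular: f(S' ∪ {x}) − f(S') ≤ f(S ∪ {x}) − f(S) for every S ⊆ S' ⊆ C and x ∈ C, where P(y,S) = Pr(U_y = max{U_z : z ∈ S ∪ {0}}). -/
/-!
The purchase event for `S` is "some `y ∈ S` beats the outside option", i.e. the union of the
events `{U0 ≤ U y}` over `y ∈ S`, so `f` is a coverage function. The marginal gain of `x` over
`S` is then the probability of `{U0 ≤ U x}` minus that union, which shrinks as `S` grows.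
-/

open Finset MeasureTheory

theorem Finset.setOf_exists_le_and_forall_le_eq_biUnion {Ω ι α : Type*} [LinearOrder α]
    (u0 : Ω → α) (u : ι → Ω → α) (T : Finset ι) :
    {ω | ∃ x ∈ T, u0 ω ≤ u x ω ∧ ∀ y ∈ T, u y ω ≤ u x ω} = ⋃ y ∈ T, {ω | u0 ω ≤ u y ω} := by
  ext ω
  simp only [Set.mem_ofPred_eq, Set.mem_iUnion, exists_prop]
  constructor
  · rintro ⟨x, hx, h0x, -⟩
    exact ⟨x, hx, h0x⟩
  · rintro ⟨y, hy, h0y⟩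
    obtain ⟨m, hm, hmax⟩ := T.exists_max_image (fun z => u z ω) ⟨y, hy⟩
    exact ⟨m, hm, h0y.trans (hmax y hy), hmax⟩

theorem MeasureTheory.measureReal_union_sub_le_of_subset {α : Type*} [MeasurableSpace α]
    {μ : Measure α} [IsFiniteMeasure μ] {s t t' : Set α} (ht : MeasurableSet t)
    (ht' : MeasurableSet t') (h : t ⊆ t') :
    μ.real (s ∪ t') - μ.real t' ≤ μ.real (s ∪ t) - μ.real t := by
  rw [← measureReal_sdiff' ht', ← measureReal_sdiff' ht]
  exact measureReal_mono (Set.sdiff_subset_sdiff_right h)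

theorem stmt10_general {Ω : Type*} [MeasurableSpace Ω] (μ : Measure Ω)
    [IsProbabilityMeasure μ] (N : ℕ)
    (U0 : Ω → ℝ) (U : Fin N → Ω → ℝ)
    (hm0 : Measurable U0) (hm : ∀ x, Measurable (U x))
    (f : Finset (Fin N) → ℝ)
    (hf : ∀ S : Finset (Fin N),
      f S = (μ {ω | ∃ x ∈ S, U0 ω ≤ U x ω ∧ ∀ y ∈ S, U y ω ≤ U x ω}).toReal) :
    ∀ S S' : Finset (Fin N), S ⊆ S' → ∀ x : Fin N,
      f (insert x S') - f S' ≤ f (insert x S) - f S := by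
  intro S S' hSS x
  have hf_cover : ∀ T, f T = μ.real (⋃ y ∈ T, {ω | U0 ω ≤ U y ω}) := fun T => by
    rw [hf, setOf_exists_le_and_forall_le_eq_biUnion, measureReal_def]
  have h_meas : ∀ T : Finset (Fin N), MeasurableSet (⋃ y ∈ T, {ω | U0 ω ≤ U y ω}) :=
    fun T => T.measurableSet_biUnion fun y _ => measurableSet_le hm0 (hm y)
  simp only [hf_cover, set_biUnion_insert]
  exact measureReal_union_sub_le_of_subset (h_meas S) (h_meas S')
    (Set.biUnion_subset_biUnion_left (coe_subset.2 hSS))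

/-- In any random utility model (utilities `U0` for no-purchase and `U x` for
products, a.s. pairwise distinct), the demand function
`f S = Pr(the maximum utility over S ∪ {0} is attained in S)` is submodular. -/
theorem stmt10 {Ω : Type*} [MeasurableSpace Ω] (μ : Measure Ω)
    [IsProbabilityMeasure μ] (N : ℕ)
    (U0 : Ω → ℝ) (U : Fin N → Ω → ℝ)
    (hm0 : Measurable U0) (hm : ∀ x, Measurable (U x))
    (hd : ∀ x y : Fin N, x ≠ y → μ {ω | U x ω = U y ω} = 0)
    (hd0 : ∀ x : Fin N, μ {ω | U x ω = U0 ω} = 0)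
    (f : Finset (Fin N) → ℝ)
    (hf : ∀ S : Finset (Fin N),
      f S = (μ {ω | ∃ x ∈ S, U0 ω ≤ U x ω ∧ ∀ y ∈ S, U y ω ≤ U x ω}).toReal) :
    ∀ S S' : Finset (Fin N), S ⊆ S' → ∀ x : Fin N,
      f (insert x S') - f S' ≤ f (insert x S) - f S :=
  stmt10_general μ N U0 U hm0 hm f hf
end

section
/- There exists a regular discrete choice model on three products that is not a RUM: specifically, the system of choice probabilities given by P(x,{x}) = 0.5 for each x ∈ {1,2,3}, P(x,S) = 0.3 for each x in each two-element set S, and P(x,{1,2,3}) = 0.25 for each x, satisfies axioms (i)–(iv) of regular discrete choice models but its demand function f(S) = ∑_{x∈S} P(x,S) is not submodular, since f({1,2,3}) − f({1,2}) = 0.15 > 0.1 = f({1,3}) − f({1}). -/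
/-!
When `P(x, S) = w |S|` depends only on the size of the menu, the demand is `f(S) = |S| w |S|`.
The regularity axioms then reduce to `w ≥ 0`, `w` antitone on positive sizes, and `n w n`
monotone and at most `1`; the weights `1/2, 3/10, 1/4` satisfy these, but the demands
`1/2, 3/5, 3/4` have increments `1/10 < 3/20`, so `f` is not submodular.
-/

open Finset

noncomputable def sizeBasedChoice {α : Type*} [DecidableEq α] (w : ℕ → ℝ) (x : α) (S : Finset α) :
    ℝ :=
  if x ∈ S then w S.card else 0

section SizeBasedChoice

variable {α : Type*} [DecidableEq α] {w : ℕ → ℝ}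

lemma sizeBasedChoice_nonneg (hw : ∀ n, 0 ≤ w n) (x : α) (S : Finset α) :
    0 ≤ sizeBasedChoice w x S := by
  unfold sizeBasedChoice
  split_ifs
  exacts [hw _, le_rfl]

lemma sizeBasedChoice_of_notMem {x : α} {S : Finset α} (hx : x ∉ S) :
    sizeBasedChoice w x S = 0 :=
  if_neg hx

lemma sum_sizeBasedChoice (w : ℕ → ℝ) (S : Finset α) :
    ∑ x ∈ S, sizeBasedChoice w x S = S.card * w S.card := by
  have hS : ∀ x ∈ S, sizeBasedChoice w x S = w S.card := fun x hx => if_pos hx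
  rw [sum_congr rfl hS, sum_const, nsmul_eq_mul]

lemma sum_sizeBasedChoice_le_one [Fintype α] (hw : ∀ n ≤ Fintype.card α, n * w n ≤ 1)
    (S : Finset α) : ∑ x ∈ S, sizeBasedChoice w x S ≤ 1 :=
  sum_sizeBasedChoice w S ▸ hw _ (card_le_univ S)

lemma sizeBasedChoice_antitone (hw : AntitoneOn w (Set.Ici 1)) {S S' : Finset α} (hS : S ⊆ S')
    {x : α} (hx : x ∈ S) : sizeBasedChoice w x S' ≤ sizeBasedChoice w x S := by
  have hpos : 1 ≤ S.card := card_pos.mpr ⟨x, hx⟩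
  rw [sizeBasedChoice, sizeBasedChoice, if_pos (hS hx), if_pos hx]
  exact hw (Set.mem_Ici.mpr hpos) (Set.mem_Ici.mpr (hpos.trans (card_le_card hS)))
    (card_le_card hS)

lemma sum_sizeBasedChoice_mono (hw : Monotone fun n : ℕ => n * w n) {S S' : Finset α}
    (hS : S ⊆ S') : ∑ x ∈ S, sizeBasedChoice w x S ≤ ∑ x ∈ S', sizeBasedChoice w x S' := by
  rw [sum_sizeBasedChoice, sum_sizeBasedChoice]
  exact hw (card_le_card hS)

end SizeBasedChoice

noncomputable def paperWeight (n : ℕ) : ℝ :=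
  if n = 1 then 1 / 2 else if n = 2 then 3 / 10 else 1 / 4

lemma paperWeight_nonneg (n : ℕ) : 0 ≤ paperWeight n := by
  unfold paperWeight
  split_ifs <;> norm_num

lemma paperWeight_antitoneOn : AntitoneOn paperWeight (Set.Ici 1) := by
  intro a ha b _ hab
  simp only [Set.mem_Ici] at ha
  unfold paperWeight
  split_ifs <;> first | omega | norm_num

lemma monotone_mul_paperWeight : Monotone fun n : ℕ => n * paperWeight n := by
  refine monotone_nat_of_le_succ fun n => ?_
  rcases n with _ | _ | _ | n <;> simp [paperWeight] <;> norm_num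

lemma mul_paperWeight_le_one {n : ℕ} (hn : n ≤ 3) : n * paperWeight n ≤ 1 := by
  interval_cases n <;> norm_num [paperWeight]

/-- There is a regular discrete choice model on three products whose demand
function is not submodular (hence it is not a RUM): `P(x,S)` equals `1/2`,
`3/10`, `1/4` according to whether `|S| = 1, 2, 3` (and `0` if `x ∉ S`).
It satisfies all four axioms of regular discrete choice models, yet
`f({1,2,3}) − f({1,2}) = 0.15 > 0.1 = f({1,3}) − f({1})`. -/
theorem stmt11 :
    ∃ P : Fin 3 → Finset (Fin 3) → ℝ,
      (∀ (x : Fin 3) (S : Finset (Fin 3)),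
        P x S = if x ∈ S then
          (if S.card = 1 then 1 / 2 else if S.card = 2 then 3 / 10 else 1 / 4)
          else 0) ∧
      (∀ (x : Fin 3) (S : Finset (Fin 3)), 0 ≤ P x S) ∧
      (∀ (x : Fin 3) (S : Finset (Fin 3)), x ∉ S → P x S = 0) ∧
      (∀ S : Finset (Fin 3), ∑ x ∈ S, P x S ≤ 1) ∧
      (∀ S S' : Finset (Fin 3), S ⊆ S' → ∀ x ∈ S, P x S' ≤ P x S) ∧
      (∀ S S' : Finset (Fin 3), S ⊆ S' →
        1 - ∑ x ∈ S', P x S' ≤ 1 - ∑ x ∈ S, P x S) ∧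
      (∑ x ∈ (Finset.univ : Finset (Fin 3)), P x Finset.univ)
          - (∑ x ∈ ({0, 1} : Finset (Fin 3)), P x {0, 1}) = 15 / 100 ∧
      (∑ x ∈ ({0, 2} : Finset (Fin 3)), P x {0, 2})
          - (∑ x ∈ ({0} : Finset (Fin 3)), P x {0}) = 1 / 10 ∧
      (∑ x ∈ (Finset.univ : Finset (Fin 3)), P x Finset.univ)
          - (∑ x ∈ ({0, 1} : Finset (Fin 3)), P x {0, 1})
        > (∑ x ∈ ({0, 2} : Finset (Fin 3)), P x {0, 2})
          - (∑ x ∈ ({0} : Finset (Fin 3)), P x {0}) := by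
  have demand (S : Finset (Fin 3)) :
      ∑ x ∈ S, sizeBasedChoice paperWeight x S = S.card * paperWeight S.card :=
    sum_sizeBasedChoice paperWeight S
  refine ⟨sizeBasedChoice paperWeight, fun _ _ => rfl, sizeBasedChoice_nonneg paperWeight_nonneg,
    fun _ _ => sizeBasedChoice_of_notMem,
    sum_sizeBasedChoice_le_one fun _ hn => mul_paperWeight_le_one hn,
    fun _ _ hS _ => sizeBasedChoice_antitone paperWeight_antitoneOn hS,
    fun _ _ hS => sub_le_sub_left (sum_sizeBasedChoice_mono monotone_mul_paperWeight hS) 1,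
    ?_, ?_, ?_⟩ <;>
  simp only [demand, card_univ, Fintype.card_fin, card_pair (by decide : (0 : Fin 3) ≠ 1),
    card_pair (by decide : (0 : Fin 3) ≠ 2), card_singleton] <;>
  norm_num [paperWeight]
end

section
/- In the UDP_min problem there always exists an optimal price assignment whose prices all belong to the set of consumer valuations {v_1, ..., v_m}: for any price assignment p : [n] → ℝ_{>0} there is a price assignment p' with p'(x) ∈ {v_1,...,v_m} for all x whose revenue is at least that of p. -/
/-!
Round every price up to the nearest valuation, or down to the largest valuation if it exceeds
them all. A consumer who could afford some item still can, since an affordable price rounds to at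
most the consumer's own valuation. What they pay does not drop: every price in their set either
grows or falls to the largest valuation, and both stay at least the old minimum, which is itself at
most their valuation.
-/

open Finset

section RoundUp

variable {α : Type*} [LinearOrder α] (s : Finset α) (hs : s.Nonempty)

def roundUp (t : α) : α :=
  if h : (s.filter (t ≤ ·)).Nonempty then (s.filter (t ≤ ·)).min' h else s.max' hs

variable {s}

theorem roundUp_mem (t : α) : roundUp s hs t ∈ s := by
  unfold roundUp
  split_ifs with h
  · exact (mem_filter.mp (min'_mem _ h)).1
  · exact max'_mem s hs

theorem roundUp_le {t a : α} (ha : a ∈ s) (hta : t ≤ a) : roundUp s hs t ≤ a := by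
  have h : (s.filter (t ≤ ·)).Nonempty := ⟨a, mem_filter.mpr ⟨ha, hta⟩⟩
  rw [roundUp, dif_pos h]
  exact min'_le _ _ (mem_filter.mpr ⟨ha, hta⟩)

theorem min_le_roundUp (t : α) {a : α} (ha : a ∈ s) : min t a ≤ roundUp s hs t := by
  unfold roundUp
  split_ifs with h
  · exact (min_le_left t a).trans (le_min' _ _ _ fun b hb => (mem_filter.mp hb).2)
  · exact (min_le_right t a).trans (le_max' s a ha)

end RoundUp

noncomputable def payment {ι : Type*} (B : Finset ι) (w : ℝ) (p : ι → ℝ)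
    [Decidable (∃ x ∈ B, p x ≤ w)] : ℝ :=
  if ∃ x ∈ B, p x ≤ w then sInf (p '' (B : Set ι)) else 0

theorem payment_le_payment {ι : Type*} {B : Finset ι} {w : ℝ} {p q : ι → ℝ}
    (hbuy : ∀ x, p x ≤ w → q x ≤ w) (hmin : ∀ x, min (p x) w ≤ q x) (hq : ∀ x, 0 ≤ q x)
    [Decidable (∃ x ∈ B, p x ≤ w)] [Decidable (∃ x ∈ B, q x ≤ w)] :
    payment B w p ≤ payment B w q := by
  unfold payment
  by_cases hp : ∃ x ∈ B, p x ≤ w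
  · obtain ⟨x₀, hx₀B, hx₀⟩ := hp
    rw [if_pos ⟨x₀, hx₀B, hx₀⟩, if_pos ⟨x₀, hx₀B, hbuy x₀ hx₀⟩]
    have hbdd : BddBelow (p '' (B : Set ι)) := (B.finite_toSet.image p).bddBelow
    refine le_csInf ⟨q x₀, x₀, hx₀B, rfl⟩ ?_
    rintro _ ⟨y, hyB, rfl⟩
    calc sInf (p '' (B : Set ι)) ≤ min (p y) w :=
          le_min (csInf_le hbdd ⟨y, hyB, rfl⟩) ((csInf_le hbdd ⟨x₀, hx₀B, rfl⟩).trans hx₀)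
      _ ≤ q y := hmin y
  · rw [if_neg hp]
    split_ifs
    · exact Real.sInf_nonneg (by rintro _ ⟨y, -, rfl⟩; exact hq y)
    · rfl

open scoped Classical in
theorem stmt12_general (n m : ℕ) (hm : 0 < m)
    (B : Fin m → Finset (Fin n)) (v : Fin m → ℝ) (hv : ∀ i, 0 ≤ v i)
    (p : Fin n → ℝ) :
    ∃ p' : Fin n → ℝ, (∀ x, p' x ∈ Set.range v) ∧
      (∑ i : Fin m, if ∃ x ∈ B i, p x ≤ v i
          then sInf (p '' (B i : Set (Fin n))) else 0)
        ≤ ∑ i : Fin m, if ∃ x ∈ B i, p' x ≤ v i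
          then sInf (p' '' (B i : Set (Fin n))) else 0 := by
  have hs : (univ.image v).Nonempty := univ_nonempty_iff.mpr ⟨⟨0, hm⟩⟩ |>.image v
  have hround_mem : ∀ t, roundUp _ hs t ∈ Set.range v := fun t => by
    simpa using roundUp_mem hs t
  refine ⟨roundUp _ hs ∘ p, fun x => hround_mem (p x), sum_le_sum fun i _ => ?_⟩
  have hvi : v i ∈ univ.image v := mem_image_of_mem v (mem_univ i)
  show payment (B i) (v i) p ≤ payment (B i) (v i) (roundUp _ hs ∘ p)
  refine payment_le_payment (fun x => roundUp_le hs hvi) (fun x => min_le_roundUp hs _ hvi)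
    fun x => ?_
  obtain ⟨j, hj⟩ := hround_mem (p x)
  exact hj ▸ hv j

open scoped Classical in
/-- In the `UDP_min` problem (consumer `i` has acceptable set `B i` and valuation
`v i`, and buys a cheapest item of `B i` if its price is at most `v i`), for any
price assignment `p` there is a price assignment `p'` taking values in the set of
consumer valuations whose revenue is at least that of `p`. -/
theorem stmt12 (n m : ℕ) (hm : 0 < m)
    (B : Fin m → Finset (Fin n)) (v : Fin m → ℝ) (hv : ∀ i, 0 ≤ v i)
    (p : Fin n → ℝ) (hp : ∀ x, 0 < p x) :
    ∃ p' : Fin n → ℝ, (∀ x, p' x ∈ Set.range v) ∧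
      (∑ i : Fin m, if ∃ x ∈ B i, p x ≤ v i
          then sInf (p '' (B i : Set (Fin n))) else 0)
        ≤ ∑ i : Fin m, if ∃ x ∈ B i, p' x ≤ v i
          then sInf (p' '' (B i : Set (Fin n))) else 0 :=
  stmt12_general n m hm B v hv p
end

section
/- Let M = (E, X) be a matroid, L a linear ordering of E, and for F ⊆ E let greedy_M(F, L) be the independent set produced by the greedy algorithm on F using ordering L. Then for every F ⊆ F' ⊆ E: (i) |greedy_M(F', L)| ≥ |greedy_M(F, L)|, and (ii) F ∩ greedy_M(F', L) ⊆ greedy_M(F, L). -/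
open Finset

/-- The greedy algorithm: process the elements of the given list in order, adding
an element whenever the current set stays independent. -/
def greedyList {α : Type*} [DecidableEq α] (Ind : Finset α → Prop)
    [DecidablePred Ind] : List α → Finset α → Finset α
  | [], acc => acc
  | e :: rest, acc =>
      if Ind (insert e acc) then greedyList Ind rest (insert e acc)
      else greedyList Ind rest acc

/-!
Run greedy on `F` and on `F' ⊇ F` side by side, with current sets `A` and `A'`. Throughout,
both are independent, `A' ∩ F ⊆ A`, and `A'` spans `A` (each element of `A` lies in `A'` or is
dependent on it). Spanning is what forces the `F`-run to accept every element of `F` accepted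
by the `F'`-run, and at the end it gives `|A| ≤ |A'|` by the exchange axiom.
-/

section

variable {α : Type*} [DecidableEq α] (Ind : Finset α → Prop)

def ExchangeProperty : Prop :=
  ∀ X Y : Finset α, Ind X → Ind Y → X.card < Y.card → ∃ y ∈ Y \ X, Ind (insert y X)

/-- For independent `B`, this says `A ⊆ closure B`. -/
def Spans (B A : Finset α) : Prop :=
  ∀ a ∈ A, a ∈ B ∨ ¬ Ind (insert a B)

variable {Ind}

theorem ExchangeProperty.exists_augment (h_exch : ExchangeProperty Ind) {A T : Finset α}
    (hA : Ind A) (hT : Ind T) : ∃ S, A ⊆ S ∧ S ⊆ A ∪ T ∧ Ind S ∧ T.card ≤ S.card := by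
  by_cases hcard : T.card ≤ A.card
  · exact ⟨A, Subset.rfl, subset_union_left, hA, hcard⟩
  obtain ⟨y, hy, hyA⟩ := h_exch A T hA hT (not_le.mp hcard)
  obtain ⟨S, hAS, hST, hS, hTS⟩ := h_exch.exists_augment hyA hT
  refine ⟨S, (subset_insert y A).trans hAS, hST.trans ?_, hS, hTS⟩
  exact union_subset (insert_subset (mem_union_right _ (mem_sdiff.mp hy).1) subset_union_left)
    subset_union_right
termination_by T.card - A.card
decreasing_by rw [card_insert_of_notMem (mem_sdiff.mp hy).2]; omega

theorem Spans.card_le (h_exch : ExchangeProperty Ind) {A B : Finset α} (hAB : Spans Ind B A)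
    (hA : Ind A) (hB : Ind B) : A.card ≤ B.card := by
  by_contra! hlt
  obtain ⟨y, hy, hyB⟩ := h_exch B A hB hA hlt
  rw [mem_sdiff] at hy
  exact (hAB y hy.1).elim hy.2 (· hyB)

theorem Spans.mono (h_down : ∀ X Y : Finset α, Y ⊆ X → Ind X → Ind Y) {A B C : Finset α}
    (hAB : Spans Ind B A) (hBC : B ⊆ C) : Spans Ind C A := fun a ha =>
  (hAB a ha).imp (@hBC a) fun hdep hC => hdep (h_down _ _ (insert_subset_insert a hBC) hC)

theorem Spans.indep_insert (h_down : ∀ X Y : Finset α, Y ⊆ X → Ind X → Ind Y)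
    (h_exch : ExchangeProperty Ind) {A B : Finset α} {e : α} (hAB : Spans Ind B A)
    (hA : Ind A) (hB : Ind B) (heB : e ∉ B) (he : Ind (insert e B)) : Ind (insert e A) := by
  obtain ⟨S, hAS, hS, hIndS, hcard⟩ := h_exch.exists_augment hA he
  by_cases heS : e ∈ S
  · exact h_down S _ (insert_subset heS hAS) hIndS
  have hSB : Spans Ind B S := fun x hx => by
    rcases mem_union.mp (hS hx) with hxA | hxB
    · exact hAB x hxA
    · exact .inl ((mem_insert.mp hxB).resolve_left (ne_of_mem_of_not_mem hx heS))
  have := hSB.card_le h_exch hIndS hB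
  rw [card_insert_of_notMem heB] at hcard
  omega

variable (Ind) in
def greedyStep [DecidablePred Ind] (e : α) (A : Finset α) : Finset α :=
  if Ind (insert e A) then insert e A else A

variable [DecidablePred Ind]

theorem greedyList_cons (e : α) (L : List α) (A : Finset α) :
    greedyList Ind (e :: L) A = greedyList Ind L (greedyStep Ind e A) := by
  rw [greedyList, greedyStep]
  split_ifs <;> rfl

theorem greedyStep_of_mem {e : α} {A : Finset α} (he : e ∈ A) : greedyStep Ind e A = A := by
  simp [greedyStep, insert_eq_of_mem he]

variable (Ind) in
structure GreedyCoupling (F A A' : Finset α) : Prop where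
  indep : Ind A
  indep' : Ind A'
  inter_subset : A' ∩ F ⊆ A
  spans : Spans Ind A' A

namespace GreedyCoupling

variable {F A A' : Finset α} {e : α}

theorem step_right (h_down : ∀ X Y : Finset α, Y ⊆ X → Ind X → Ind Y)
    (h : GreedyCoupling Ind F A A') (he : e ∉ F) :
    GreedyCoupling Ind F A (greedyStep Ind e A') := by
  unfold greedyStep
  split_ifs with hacc
  · refine ⟨h.indep, hacc, ?_, h.spans.mono h_down (subset_insert e A')⟩
    rw [insert_inter_of_notMem he]
    exact h.inter_subset
  · exact h

theorem step_both (h_down : ∀ X Y : Finset α, Y ⊆ X → Ind X → Ind Y)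
    (h_exch : ExchangeProperty Ind) (h : GreedyCoupling Ind F A A') (he : e ∈ F) :
    GreedyCoupling Ind F (greedyStep Ind e A) (greedyStep Ind e A') := by
  by_cases heA' : e ∈ A'
  · rw [greedyStep_of_mem (h.inter_subset (mem_inter.mpr ⟨heA', he⟩)), greedyStep_of_mem heA']
    exact h
  by_cases hacc' : Ind (insert e A')
  · have hacc : Ind (insert e A) :=
      h.spans.indep_insert h_down h_exch h.indep h.indep' heA' hacc'
    simp only [greedyStep, hacc, hacc', if_true]
    refine ⟨hacc, hacc', ?_, ?_⟩
    · rw [insert_inter_of_mem he]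
      exact insert_subset_insert e h.inter_subset
    · exact (forall_mem_insert _ _ _).mpr
        ⟨.inl (mem_insert_self e A'), h.spans.mono h_down (subset_insert e A')⟩
  · simp only [greedyStep, hacc', if_false]
    split_ifs with hacc
    · exact ⟨hacc, h.indep', h.inter_subset.trans (subset_insert e A),
        (forall_mem_insert _ _ _).mpr ⟨.inr hacc', h.spans⟩⟩
    · exact h

theorem greedyList (h_down : ∀ X Y : Finset α, Y ⊆ X → Ind X → Ind Y)
    (h_exch : ExchangeProperty Ind) {F' : Finset α} (hFF' : F ⊆ F')
    (L : List α) (h : GreedyCoupling Ind F A A') :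
    GreedyCoupling Ind F (_root_.greedyList Ind (L.filter (· ∈ F)) A)
      (_root_.greedyList Ind (L.filter (· ∈ F')) A') := by
  induction L generalizing A A' with
  | nil => exact h
  | cons e L ih =>
    by_cases heF : e ∈ F
    · rw [List.filter_cons_of_pos (by simpa), List.filter_cons_of_pos (by simpa using hFF' heF),
        greedyList_cons, greedyList_cons]
      exact ih (h.step_both h_down h_exch heF)
    rw [List.filter_cons_of_neg (by simpa)]
    by_cases heF' : e ∈ F'
    · rw [List.filter_cons_of_pos (by simpa), greedyList_cons]
      exact ih (h.step_right h_down heF)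
    · rw [List.filter_cons_of_neg (by simpa)]
      exact ih h

end GreedyCoupling

end

theorem stmt13_general {α : Type*} [DecidableEq α] (Ind : Finset α → Prop)
    [DecidablePred Ind]
    (h_empty : Ind ∅)
    (h_down : ∀ X Y : Finset α, Y ⊆ X → Ind X → Ind Y)
    (h_exch : ∀ X Y : Finset α, Ind X → Ind Y → X.card < Y.card →
      ∃ y ∈ Y \ X, Ind (insert y X))
    (L : List α)
    (F F' : Finset α) (hFF' : F ⊆ F') :
    (greedyList Ind (L.filter (fun x => x ∈ F)) ∅).card ≤
      (greedyList Ind (L.filter (fun x => x ∈ F')) ∅).card ∧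
    F ∩ greedyList Ind (L.filter (fun x => x ∈ F')) ∅ ⊆
      greedyList Ind (L.filter (fun x => x ∈ F)) ∅ := by
  have start : GreedyCoupling Ind F ∅ ∅ := ⟨h_empty, h_empty, by simp, by simp [Spans]⟩
  have h := start.greedyList h_down h_exch hFF' L
  exact ⟨h.spans.card_le h_exch h.indep h.indep', inter_comm F _ ▸ h.inter_subset⟩

/-- For a matroid with independence predicate `Ind` and a linear ordering of the
ground set given by a duplicate-free list `L`, running greedy on `F ⊆ F'`
(elements taken in the order of `L`) gives: (i) the greedy set of `F'` is at
least as large as that of `F`, and (ii) every element of `F` selected by greedy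
on `F'` is also selected by greedy on `F`. -/
theorem stmt13 {α : Type*} [DecidableEq α] (Ind : Finset α → Prop)
    [DecidablePred Ind]
    (h_empty : Ind ∅)
    (h_down : ∀ X Y : Finset α, Y ⊆ X → Ind X → Ind Y)
    (h_exch : ∀ X Y : Finset α, Ind X → Ind Y → X.card < Y.card →
      ∃ y ∈ Y \ X, Ind (insert y X))
    (L : List α) (hnodup : L.Nodup)
    (F F' : Finset α) (hFF' : F ⊆ F') (hF'L : ∀ x ∈ F', x ∈ L) :
    (greedyList Ind (L.filter (fun x => x ∈ F)) ∅).card ≤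
      (greedyList Ind (L.filter (fun x => x ∈ F')) ∅).card ∧
    F ∩ greedyList Ind (L.filter (fun x => x ∈ F')) ∅ ⊆
      greedyList Ind (L.filter (fun x => x ∈ F)) ∅ :=
  stmt13_general Ind h_empty h_down h_exch L F F' hFF'
end

section
/- Let M = (E, X) be a matroid whose ground set is partitioned into blocks E_1, ..., E_ℓ, and let L, L' be two linear orderings of E that agree on the block partition (every element of E_i precedes every element of E_{i+1} under both orderings). Then for every i, |greedy_M(E, L) ∩ E_i| = |greedy_M(E, L') ∩ E_i|. -/
/-!
Order the blocks by `blk` and fix a threshold `j`. Since both orderings list the blocks in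
increasing order, the elements of the greedy set lying in blocks `< j` are exactly the
greedy set of the prefix of the ordering consisting of those blocks, hence a maximal
independent subset of `E_{<j}`. By the exchange property all maximal independent subsets of
a set have the same size, so the two greedy sets have equally many elements in blocks `< j`
for every `j`; the count in block `i` is the difference of the counts for `i + 1` and `i`.
-/

open Finset

section Sorted

variable {α β : Type*} [LinearOrder β] {f : α → β} {l : List α}

theorem List.Pairwise.le_of_mem_dropWhile (hl : l.Pairwise (f · ≤ f ·)) {j : β} {x : α}
    (hx : x ∈ l.dropWhile (f · < j)) : j ≤ f x := by
  induction l with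
  | nil => simp at hx
  | cons a t ih =>
    rw [List.pairwise_cons] at hl
    rw [List.dropWhile_cons] at hx
    by_cases ha : f a < j
    · simp only [ha, decide_true, if_true] at hx
      exact ih hl.2 hx
    · simp only [ha, decide_false] at hx
      rcases List.mem_cons.1 hx with rfl | hx
      · exact not_lt.1 ha
      · exact (not_lt.1 ha).trans (hl.1 x hx)

theorem List.Pairwise.toFinset_takeWhile [DecidableEq α] (hl : l.Pairwise (f · ≤ f ·))
    (j : β) :
    (l.takeWhile (f · < j)).toFinset = l.toFinset.filter (f · < j) := by
  ext x
  rw [Finset.mem_filter, List.mem_toFinset, List.mem_toFinset]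
  constructor
  · intro hx
    exact ⟨(List.takeWhile_sublist _).subset hx, by simpa using List.mem_takeWhile_imp hx⟩
  · rintro ⟨hx, hxj⟩
    rw [← List.takeWhile_append_dropWhile (p := (f · < j)) (l := l), List.mem_append] at hx
    exact hx.resolve_right fun hx' => (hl.le_of_mem_dropWhile hx').not_gt hxj

theorem List.Nodup.pairwise_of_idxOf_lt [BEq α] [LawfulBEq α] (hl : l.Nodup)
    (hord : ∀ x y, x ∈ l → y ∈ l → f x < f y → l.idxOf x < l.idxOf y) :
    l.Pairwise (f · ≤ f ·) := by
  rw [List.pairwise_iff_get]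
  intro i j hij
  by_contra! hlt
  have := hord _ _ (l.get_mem _) (l.get_mem _) hlt
  rw [List.get_idxOf hl, List.get_idxOf hl] at this
  omega

end Sorted

theorem Finset.card_filter_eq_of_card_filter_lt_eq {α : Type*} [DecidableEq α] {s t : Finset α}
    (f : α → ℕ)
    (h : ∀ j, (s.filter (f · < j)).card = (t.filter (f · < j)).card) (i : ℕ) :
    (s.filter (f · = i)).card = (t.filter (f · = i)).card := by
  have split (u : Finset α) :
      (u.filter (f · < i + 1)).card = (u.filter (f · = i)).card + (u.filter (f · < i)).card := by
    rw [← card_union_of_disjoint (disjoint_filter.2 fun _ _ h => h.not_lt), ← filter_or]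
    congr 1
    exact filter_congr fun _ _ => by omega
  have := h (i + 1)
  rw [split, split, h i] at this
  omega

section Greedy

variable {α : Type*} [DecidableEq α] (Ind : Finset α → Prop) [DecidablePred Ind]

theorem greedyList_append (l₁ l₂ : List α) (acc : Finset α) :
    greedyList Ind (l₁ ++ l₂) acc = greedyList Ind l₂ (greedyList Ind l₁ acc) := by
  induction l₁ generalizing acc with
  | nil => rfl
  | cons e l₁ ih => simp only [List.cons_append, greedyList]; split <;> apply ih

theorem subset_greedyList (l : List α) (acc : Finset α) : acc ⊆ greedyList Ind l acc := by
  induction l generalizing acc with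
  | nil => exact Subset.rfl
  | cons e l ih =>
    rw [greedyList]
    split
    · exact (subset_insert e acc).trans (ih _)
    · exact ih acc

theorem greedyList_subset (l : List α) (acc : Finset α) :
    greedyList Ind l acc ⊆ acc ∪ l.toFinset := by
  induction l generalizing acc with
  | nil => simp [greedyList]
  | cons e l ih =>
    rw [greedyList]
    split
    · exact (ih _).trans (by rw [List.toFinset_cons, insert_union, union_insert])
    · exact (ih acc).trans (union_subset_union_right (by simp))

theorem greedyList_indep (l : List α) {acc : Finset α} (hacc : Ind acc) :
    Ind (greedyList Ind l acc) := by
  induction l generalizing acc with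
  | nil => exact hacc
  | cons e l ih =>
    rw [greedyList]
    split <;> exact ih ‹_›

theorem not_indep_insert_greedyList (h_down : ∀ X Y : Finset α, Y ⊆ X → Ind X → Ind Y)
    {l : List α} (acc : Finset α) {e : α} (he : e ∈ l) (hne : e ∉ greedyList Ind l acc) :
    ¬ Ind (insert e (greedyList Ind l acc)) := by
  induction l generalizing acc with
  | nil => simp at he
  | cons a l ih =>
    rw [greedyList] at hne ⊢
    by_cases ha : Ind (insert a acc)
    · rw [if_pos ha] at hne ⊢
      rcases List.mem_cons.1 he with rfl | he
      · exact absurd (subset_greedyList Ind l _ (mem_insert_self e acc)) hne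
      · exact ih _ he hne
    · rw [if_neg ha] at hne ⊢
      rcases List.mem_cons.1 he with rfl | he
      · exact fun h => ha (h_down _ _ (insert_subset_insert e (subset_greedyList Ind l acc)) h)
      · exact ih _ he hne

theorem maximal_greedyList (h_empty : Ind ∅)
    (h_down : ∀ X Y : Finset α, Y ⊆ X → Ind X → Ind Y) (l : List α) :
    Maximal (fun A => Ind A ∧ A ⊆ l.toFinset) (greedyList Ind l ∅) := by
  rw [maximal_iff_forall_insert fun _ _ ht hst => ⟨h_down _ _ hst ht.1, hst.trans ht.2⟩]
  refine ⟨⟨greedyList_indep Ind l h_empty, by simpa using greedyList_subset Ind l ∅⟩, ?_⟩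
  intro e he hind
  exact not_indep_insert_greedyList Ind h_down ∅
    (List.mem_toFinset.1 (hind.2 (mem_insert_self e _))) he hind.1

theorem greedyList_filter_of_forall_not_mem {p : α → Prop} [DecidablePred p] {l : List α}
    (hl : ∀ x ∈ l, ¬ p x) (acc : Finset α) :
    (greedyList Ind l acc).filter p = acc.filter p := by
  refine (filter_subset_filter p (subset_greedyList Ind l acc)).antisymm' fun x hx => ?_
  rw [mem_filter] at hx ⊢
  have := greedyList_subset Ind l acc hx.1
  rw [mem_union, List.mem_toFinset] at this
  exact ⟨this.resolve_right fun hxl => hl x hxl hx.2, hx.2⟩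

theorem greedyList_filter_lt {blk : α → ℕ} {l : List α} (hl : l.Pairwise (blk · ≤ blk ·))
    (j : ℕ) :
    (greedyList Ind l ∅).filter (blk · < j) = greedyList Ind (l.takeWhile (blk · < j)) ∅ := by
  conv_lhs => rw [← List.takeWhile_append_dropWhile (p := (blk · < j)) (l := l)]
  rw [greedyList_append, greedyList_filter_of_forall_not_mem Ind
    fun x hx => (hl.le_of_mem_dropWhile hx).not_gt]
  refine filter_true_of_mem fun x hx => ?_
  have := greedyList_subset Ind _ ∅ hx
  simp only [empty_union, List.mem_toFinset] at this
  simpa using List.mem_takeWhile_imp this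

end Greedy

theorem card_eq_of_maximal_indep {α : Type*} [DecidableEq α] {Ind : Finset α → Prop}
    (h_exch : ∀ X Y : Finset α, Ind X → Ind Y → X.card < Y.card →
      ∃ y ∈ Y \ X, Ind (insert y X))
    {S A B : Finset α} (hA : Maximal (fun A => Ind A ∧ A ⊆ S) A)
    (hB : Maximal (fun A => Ind A ∧ A ⊆ S) B) : A.card = B.card := by
  have key {A B : Finset α} (hA : Maximal (fun A => Ind A ∧ A ⊆ S) A)
      (hB : Maximal (fun A => Ind A ∧ A ⊆ S) B) : ¬ A.card < B.card := fun hlt => by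
    obtain ⟨y, hy, hind⟩ := h_exch A B hA.prop.1 hB.prop.1 hlt
    rw [mem_sdiff] at hy
    exact hy.2 (hA.2 ⟨hind, insert_subset (hB.prop.2 hy.1) hA.prop.2⟩ (subset_insert y A)
      (mem_insert_self y A))
  exact le_antisymm (not_lt.1 (key hB hA)) (not_lt.1 (key hA hB))

/-- For a matroid whose ground set is partitioned into blocks (the fibers of
`blk`), any two greedy orderings `L, L'` that agree with the block partition
(elements of earlier blocks come first) produce greedy sets with the same number
of elements in each block. -/
theorem stmt14 {α : Type*} [DecidableEq α] (Ind : Finset α → Prop)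
    [DecidablePred Ind]
    (h_empty : Ind ∅)
    (h_down : ∀ X Y : Finset α, Y ⊆ X → Ind X → Ind Y)
    (h_exch : ∀ X Y : Finset α, Ind X → Ind Y → X.card < Y.card →
      ∃ y ∈ Y \ X, Ind (insert y X))
    (blk : α → ℕ)
    (L L' : List α) (hL : L.Nodup) (hL' : L'.Nodup) (hperm : L.Perm L')
    (hordL : ∀ x y, x ∈ L → y ∈ L → blk x < blk y → L.idxOf x < L.idxOf y)
    (hordL' : ∀ x y, x ∈ L' → y ∈ L' → blk x < blk y →
      L'.idxOf x < L'.idxOf y) :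
    ∀ i : ℕ, ((greedyList Ind L ∅).filter (fun x => blk x = i)).card =
      ((greedyList Ind L' ∅).filter (fun x => blk x = i)).card := by
  refine card_filter_eq_of_card_filter_lt_eq blk fun j => ?_
  have hsorted := hL.pairwise_of_idxOf_lt hordL
  have hsorted' := hL'.pairwise_of_idxOf_lt hordL'
  rw [greedyList_filter_lt Ind hsorted, greedyList_filter_lt Ind hsorted']
  have hmax := maximal_greedyList Ind h_empty h_down (L.takeWhile (blk · < j))
  have hmax' := maximal_greedyList Ind h_empty h_down (L'.takeWhile (blk · < j))
  rw [hsorted.toFinset_takeWhile] at hmax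
  rw [hsorted'.toFinset_takeWhile, ← List.toFinset_eq_of_perm _ _ hperm] at hmax'
  exact card_eq_of_maximal_indep h_exch hmax hmax'
end

section
/- For the UDP_min problem, the uniform pricing strategy (offering the same price to all items, optimized over all choices of uniform price) achieves revenue at least OPT/(1 + ln(v_m/v_1)), where v_1 ≤ ... ≤ v_m are the consumer valuations (assumed positive) and OPT is the optimal revenue over all price assignments. -/
/-!
Let `R` be the best revenue of a uniform price at one of the valuations. A buyer paying `t`
dominates the uniform price `v j`, where `j` minimises the valuation among the buyers paying at
least `t`; hence `t · #{buyers paying ≥ t} ≤ R`. Peeling off the cheapest buyer, the `l`-th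
largest payment is at most `min v_max (R / l)`, and since there are at most `R / v_min` buyers,
`∑ₗ min v_max (R / l) ≤ R (1 + log (v_max / v_min))`, a discrete form of
`∫₀^{R/v_min} min v_max (R / t) dt`.
-/

open Finset Real

noncomputable def uniformRevenue {ι α : Type*} [Fintype ι] (B : ι → Finset α) (v : ι → ℝ)
    (q : ℝ) : ℝ :=
  q * #{i | (B i).Nonempty ∧ q ≤ v i}

/-- `∫₀ˣ min c⁻¹ t⁻¹ dt`. -/
noncomputable def cappedHarmonic (c x : ℝ) : ℝ :=
  if x ≤ c then x / c else 1 + log (x / c)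

lemma cappedHarmonic_zero {c : ℝ} (hc : 0 ≤ c) : cappedHarmonic c 0 = 0 := by
  simp [cappedHarmonic, hc]

lemma min_inv_le_cappedHarmonic_add_one_sub {c x : ℝ} (hc : 0 < c) (hx : 0 ≤ x) :
    min c⁻¹ (x + 1)⁻¹ ≤ cappedHarmonic c (x + 1) - cappedHarmonic c x := by
  unfold cappedHarmonic
  rcases le_or_gt (x + 1) c with hxc | hcx
  · rw [if_pos hxc, if_pos (by linarith)]
    have : (x + 1) / c - x / c = c⁻¹ := by field_simp; ring
    linarith [min_le_left c⁻¹ (x + 1)⁻¹]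
  rw [if_neg hcx.not_ge]
  refine (min_le_right _ _).trans ?_
  rcases lt_or_ge x c with hxc | hcx'
  · -- `log y ≥ 1 - y⁻¹` at `y = (x + 1) / c` reduces this to `(c - x) (x + 1 - c) ≥ 0`.
    rw [if_pos hxc.le]
    have hlog := one_sub_inv_le_log_of_pos (show 0 < (x + 1) / c by positivity)
    rw [inv_div] at hlog
    have key : x / c + (1 + c) / (x + 1) ≤ 2 := by
      rw [div_add_div _ _ hc.ne' (by positivity), div_le_iff₀ (by positivity)]
      nlinarith [mul_nonneg (sub_nonneg.2 hxc.le) (sub_nonneg.2 hcx.le)]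
    have : (1 + c) / (x + 1) = (x + 1)⁻¹ + c / (x + 1) := by rw [add_div, one_div]
    linarith
  · have hx0 : 0 < x := hc.trans_le hcx'
    have hFx : (if x ≤ c then x / c else 1 + log (x / c)) = 1 + log (x / c) := by
      split_ifs with h
      · rw [le_antisymm h hcx', div_self hc.ne', log_one, add_zero]
      · rfl
    have hlog := one_sub_inv_le_log_of_pos (show 0 < (x + 1) / x by positivity)
    rw [inv_div, log_div (by positivity) hx0.ne'] at hlog
    have : 1 - x / (x + 1) = (x + 1)⁻¹ := by field_simp; ring
    rw [hFx, log_div (by positivity) hc.ne', log_div hx0.ne' hc.ne']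
    linarith

lemma sum_range_min_inv_le_cappedHarmonic {c : ℝ} (hc : 0 < c) (k : ℕ) :
    ∑ l ∈ range k, min c⁻¹ ((l : ℝ) + 1)⁻¹ ≤ cappedHarmonic c k := by
  calc ∑ l ∈ range k, min c⁻¹ ((l : ℝ) + 1)⁻¹
      ≤ ∑ l ∈ range k, (cappedHarmonic c ((l + 1 : ℕ) : ℝ) - cappedHarmonic c (l : ℕ)) :=
        sum_le_sum fun l _ => by
          simpa using min_inv_le_cappedHarmonic_add_one_sub hc l.cast_nonneg
    _ = cappedHarmonic c k := by
        rw [sum_range_sub (fun l : ℕ => cappedHarmonic c l), Nat.cast_zero,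
          cappedHarmonic_zero hc.le, sub_zero]

lemma sum_range_min_div_le_mul_one_add_log {a b R : ℝ} {k : ℕ} (ha : 0 < a) (hab : a ≤ b)
    (hR : 0 ≤ R) (hk : a * k ≤ R) :
    ∑ l ∈ range k, min b (R / (l + 1)) ≤ R * (1 + log (b / a)) := by
  have hlog : 0 ≤ log (b / a) := log_nonneg ((one_le_div ha).2 hab)
  rcases k.eq_zero_or_pos with rfl | hk0
  · simpa using mul_nonneg hR (by linarith)
  have hb : 0 < b := ha.trans_le hab
  have hRpos : 0 < R := lt_of_lt_of_le (by positivity) hk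
  have hc : 0 < R / b := by positivity
  have hterm : ∀ l : ℕ, min b (R / (l + 1)) = R * min (R / b)⁻¹ ((l : ℝ) + 1)⁻¹ := by
    intro l
    rw [mul_min_of_nonneg _ _ hRpos.le, inv_div, mul_div_cancel₀ _ hRpos.ne', div_eq_mul_inv]
  have hcap : cappedHarmonic (R / b) k ≤ 1 + log (b / a) := by
    unfold cappedHarmonic
    split_ifs with hkc
    · linarith [(div_le_one hc).2 hkc]
    · have hkb : (k : ℝ) / (R / b) ≤ b / a := by
        rw [div_div_eq_mul_div, div_le_div_iff₀ hRpos ha]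
        nlinarith
      linarith [log_le_log (by positivity) hkb]
  calc ∑ l ∈ range k, min b (R / (l + 1))
      = R * ∑ l ∈ range k, min (R / b)⁻¹ ((l : ℝ) + 1)⁻¹ := by simp_rw [hterm, mul_sum]
    _ ≤ R * cappedHarmonic (R / b) k := by
        gcongr; exact sum_range_min_inv_le_cappedHarmonic hc k
    _ ≤ R * (1 + log (b / a)) := by gcongr

lemma sum_le_sum_range_min_div {ι : Type*} [DecidableEq ι] (s : Finset ι) (f : ι → ℝ) {b R : ℝ}
    (hf0 : ∀ i ∈ s, 0 ≤ f i) (hfb : ∀ i ∈ s, f i ≤ b)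
    (hfR : ∀ i ∈ s, f i * #{j ∈ s | f i ≤ f j} ≤ R) :
    ∑ i ∈ s, f i ≤ ∑ l ∈ range #s, min b (R / (l + 1)) := by
  induction s using Finset.induction_on_min_value f with
  | empty => simp
  | insert a s ha hmin ih =>
    rw [sum_insert ha, card_insert_of_notMem ha, sum_range_succ, add_comm]
    have hall : #{j ∈ insert a s | f a ≤ f j} = #s + 1 := by
      rw [filter_true_of_mem, card_insert_of_notMem ha]
      intro j hj
      rcases mem_insert.1 hj with rfl | hj
      exacts [le_rfl, hmin j hj]
    have hfa : f a * (#s + 1 : ℝ) ≤ R := by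
      simpa [hall] using hfR a (mem_insert_self a s)
    refine add_le_add (ih (fun i hi => hf0 i (mem_insert_of_mem hi))
      (fun i hi => hfb i (mem_insert_of_mem hi)) fun i hi => ?_)
      (le_min (hfb a (mem_insert_self a s)) ?_)
    · refine le_trans ?_ (hfR i (mem_insert_of_mem hi))
      gcongr
      · exact hf0 i (mem_insert_of_mem hi)
      · exact subset_insert a s
    · rw [le_div_iff₀ (by positivity)]
      exact_mod_cast hfa

lemma mul_card_le_of_uniformRevenue_le {ι α : Type*} [Fintype ι] {B : ι → Finset α}
    {v : ι → ℝ} {R t : ℝ} {T : Finset ι} (hR : ∀ j, uniformRevenue B v (v j) ≤ R)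
    (hR0 : 0 ≤ R) (ht : 0 ≤ t) (hT : ∀ j ∈ T, (B j).Nonempty ∧ t ≤ v j) :
    t * #T ≤ R := by
  rcases T.eq_empty_or_nonempty with rfl | hTne
  · simpa using hR0
  obtain ⟨j, hjT, hjmin⟩ := T.exists_min_image v hTne
  have hsub : T ⊆ ({i | (B i).Nonempty ∧ v j ≤ v i} : Finset ι) := fun i hi =>
    mem_filter.2 ⟨mem_univ i, (hT i hi).1, hjmin i hi⟩
  calc t * #T ≤ v j * #{i | (B i).Nonempty ∧ v j ≤ v i} := by
        gcongr
        · exact ht.trans (hT j hjT).2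
        · exact (hT j hjT).2
    _ ≤ R := hR j

lemma nonempty_and_sInf_image_mem_Icc {α : Type*} {s : Finset α} {p : α → ℝ}
    (hp : ∀ x, 0 < p x) {y : ℝ} (h : ∃ x ∈ s, p x ≤ y) :
    s.Nonempty ∧ sInf (p '' s) ∈ Set.Icc 0 y := by
  obtain ⟨x, hx, hxy⟩ := h
  have hs : s.Nonempty := ⟨x, hx⟩
  rw [← inf'_eq_csInf_image s hs]
  obtain ⟨z, -, hz⟩ := s.exists_mem_eq_inf' hs p
  exact ⟨hs, hz ▸ (hp z).le, (inf'_le p hx).trans hxy⟩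

open scoped Classical in
/-- For the `UDP_min` problem with positive valuations, uniform pricing at some
consumer valuation `q` achieves revenue at least `OPT / (1 + ln (v_max / v_min))`:
for every price assignment `p`, there is a uniform price `q` (a consumer
valuation) with `revenue(p) ≤ (1 + ln (v_max / v_min)) · q · #{i : B i ≠ ∅, q ≤ v i}`. -/
theorem stmt15 (n m : ℕ)
    (B : Fin m → Finset (Fin n)) (v : Fin m → ℝ)
    (i0 imax : Fin m)
    (hmin : ∀ i, v i0 ≤ v i) (hmax : ∀ i, v i ≤ v imax)
    (hpos : 0 < v i0)
    (p : Fin n → ℝ) (hp : ∀ x, 0 < p x) :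
    ∃ q ∈ Set.range v,
      (∑ i : Fin m, if ∃ x ∈ B i, p x ≤ v i
          then sInf (p '' (B i : Set (Fin n))) else 0)
        ≤ (1 + Real.log (v imax / v i0)) *
          (q * ((Finset.univ.filter
            (fun i : Fin m => (B i).Nonempty ∧ q ≤ v i)).card : ℝ)) := by
  obtain ⟨jq, -, hjq⟩ :=
    exists_max_image univ (fun j => uniformRevenue B v (v j)) ⟨i0, mem_univ i0⟩
  set R := uniformRevenue B v (v jq)
  have hR : ∀ j, uniformRevenue B v (v j) ≤ R := fun j => hjq j (mem_univ j)
  have hR0 : 0 ≤ R := (mul_nonneg hpos.le (Nat.cast_nonneg _)).trans (hR i0)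
  set S := univ.filter fun i => ∃ x ∈ B i, p x ≤ v i
  set w := fun i => sInf (p '' (B i : Set (Fin n)))
  have hbuyer : ∀ i ∈ S, (B i).Nonempty ∧ 0 ≤ w i ∧ w i ≤ v i := fun i hi =>
    nonempty_and_sInf_image_mem_Icc hp (mem_filter.1 hi).2
  have hpay : ∀ i ∈ S, w i * #{j ∈ S | w i ≤ w j} ≤ R := fun i hi =>
    mul_card_le_of_uniformRevenue_le hR hR0 (hbuyer i hi).2.1 fun j hj =>
      have hjS := (mem_filter.1 hj).1
      ⟨(hbuyer j hjS).1, (mem_filter.1 hj).2.trans (hbuyer j hjS).2.2⟩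
  have hcard : v i0 * #S ≤ R :=
    mul_card_le_of_uniformRevenue_le hR hR0 hpos.le fun i hi => ⟨(hbuyer i hi).1, hmin i⟩
  refine ⟨v jq, ⟨jq, rfl⟩, ?_⟩
  rw [← sum_filter, mul_comm]
  calc ∑ i ∈ S, w i ≤ ∑ l ∈ range #S, min (v imax) (R / (l + 1)) :=
        sum_le_sum_range_min_div S w (fun i hi => (hbuyer i hi).2.1)
          (fun i hi => (hbuyer i hi).2.2.trans (hmax i)) hpay
    _ ≤ R * (1 + log (v imax / v i0)) :=
        sum_range_min_div_le_mul_one_add_log hpos (hmin imax) hR0 hcard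
end

section
/- For the UDP_min problem with m consumers, the uniform pricing strategy achieves revenue at least OPT/(1 + ln m). -/
/-!
Any pricing earns at most `v i` from consumer `i`, and nothing from one with `B i = ∅`, so
revenue is at most `∑ v i` over the `k ≤ m` consumers with nonempty `B i`. If `M` is the largest
value of `v i · #{j | v i ≤ v j}` among them, i.e. the best revenue of a uniform price equal to one
of these valuations, then `v i ≤ M / #{j | v i ≤ v j}`, and these reciprocal ranks sum to at most
`H_k ≤ 1 + ln m`.
-/

open Finset

namespace Finset

variable {ι : Type*}

theorem card_filter_le_apply_pos (v : ι → ℝ) {s : Finset ι} {i : ι} (hi : i ∈ s) :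
    0 < #{j ∈ s | v i ≤ v j} :=
  card_pos.mpr ⟨i, mem_filter.mpr ⟨hi, le_refl (v i)⟩⟩

/-- Adding a new minimal element `a` contributes the term `1 / (#s + 1)` and can only shrink the
other terms. -/
theorem sum_inv_card_filter_le_le_harmonic (v : ι → ℝ) (s : Finset ι) :
    ∑ i ∈ s, (#{j ∈ s | v i ≤ v j} : ℝ)⁻¹ ≤ harmonic #s := by
  classical
  induction s using Finset.induction_on_min_value v with
  | empty => simp
  | insert a s ha hmin ih =>
    have h_top : {j ∈ insert a s | v a ≤ v j} = insert a s :=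
      filter_true_of_mem fun j hj => (mem_insert.mp hj).elim (fun h => h ▸ le_rfl) (hmin j)
    have h_rest : ∀ i ∈ s, (#{j ∈ insert a s | v i ≤ v j} : ℝ)⁻¹ ≤ (#{j ∈ s | v i ≤ v j} : ℝ)⁻¹ :=
      fun i hi => inv_anti₀ (by exact_mod_cast card_filter_le_apply_pos v hi)
        (by exact_mod_cast card_le_card (filter_subset_filter _ (subset_insert a s)))
    rw [sum_insert ha, h_top, card_insert_of_notMem ha, harmonic_succ]
    push_cast
    linarith [sum_le_sum h_rest]

theorem exists_sum_le_harmonic_mul_mul_card_filter_le (v : ι → ℝ) {s : Finset ι}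
    (hs : s.Nonempty) (hv : ∀ i ∈ s, 0 ≤ v i) :
    ∃ i₀ ∈ s, ∑ i ∈ s, v i ≤ harmonic #s * (v i₀ * #{j ∈ s | v i₀ ≤ v j}) := by
  obtain ⟨i₀, hi₀, hmax⟩ := s.exists_max_image (fun i => v i * #{j ∈ s | v i ≤ v j}) hs
  refine ⟨i₀, hi₀, ?_⟩
  set M := v i₀ * #{j ∈ s | v i₀ ≤ v j}
  have hM : 0 ≤ M := mul_nonneg (hv i₀ hi₀) (Nat.cast_nonneg _)
  have h_le : ∀ i ∈ s, v i ≤ M * (#{j ∈ s | v i ≤ v j} : ℝ)⁻¹ := fun i hi => by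
    have hrank : (0 : ℝ) < #{j ∈ s | v i ≤ v j} := by
      exact_mod_cast card_filter_le_apply_pos v hi
    rw [← div_eq_mul_inv, le_div_iff₀ hrank]
    exact hmax i hi
  calc ∑ i ∈ s, v i ≤ ∑ i ∈ s, M * (#{j ∈ s | v i ≤ v j} : ℝ)⁻¹ := sum_le_sum h_le
    _ = M * ∑ i ∈ s, (#{j ∈ s | v i ≤ v j} : ℝ)⁻¹ := (mul_sum ..).symm
    _ ≤ M * harmonic #s := mul_le_mul_of_nonneg_left (sum_inv_card_filter_le_le_harmonic v s) hM
    _ = harmonic #s * M := mul_comm ..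

end Finset

theorem harmonic_le_one_add_log_of_le {k m : ℕ} (hk : 0 < k) (hkm : k ≤ m) :
    (harmonic k : ℝ) ≤ 1 + Real.log m :=
  (harmonic_le_one_add_log k).trans <| by gcongr

theorem payment_le_valuation {α : Type*} (s : Finset α) (p : α → ℝ) {w : ℝ} (hw : 0 ≤ w)
    [Decidable (∃ x ∈ s, p x ≤ w)] [Decidable s.Nonempty] :
    (if ∃ x ∈ s, p x ≤ w then sInf (p '' (s : Set α)) else 0) ≤ if s.Nonempty then w else 0 := by
  split_ifs with hbuy hne hne
  · obtain ⟨x, hx, hxw⟩ := hbuy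
    exact (csInf_le (s.finite_toSet.image p).bddBelow ⟨x, hx, rfl⟩).trans hxw
  · obtain ⟨x, hx, -⟩ := hbuy
    exact absurd ⟨x, hx⟩ hne
  · exact hw
  · exact le_rfl

open scoped Classical in
theorem stmt16_general (n m : ℕ) (hm : 0 < m)
    (B : Fin m → Finset (Fin n)) (v : Fin m → ℝ) (hv : ∀ i, 0 < v i)
    (p : Fin n → ℝ) :
    ∃ q ∈ Set.range v,
      (∑ i : Fin m, if ∃ x ∈ B i, p x ≤ v i
          then sInf (p '' (B i : Set (Fin n))) else 0)
        ≤ (1 + Real.log m) *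
          (q * ((Finset.univ.filter
            (fun i : Fin m => (B i).Nonempty ∧ q ≤ v i)).card : ℝ)) := by
  set T := univ.filter fun i : Fin m => (B i).Nonempty
  have h_rev : (∑ i : Fin m, if ∃ x ∈ B i, p x ≤ v i
      then sInf (p '' (B i : Set (Fin n))) else 0) ≤ ∑ i ∈ T, v i := by
    rw [sum_filter]
    exact sum_le_sum fun i _ => payment_le_valuation (B i) p (hv i).le
  rcases T.eq_empty_or_nonempty with hT | hT
  · refine ⟨v ⟨0, hm⟩, Set.mem_range_self _, h_rev.trans ?_⟩
    have : 0 ≤ 1 + Real.log m := by linarith [Real.log_natCast_nonneg m]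
    rw [hT, sum_empty]
    exact mul_nonneg this (mul_nonneg (hv _).le (Nat.cast_nonneg _))
  obtain ⟨i₀, hi₀, h_sum⟩ :=
    exists_sum_le_harmonic_mul_mul_card_filter_le v hT fun i _ => (hv i).le
  refine ⟨v i₀, Set.mem_range_self i₀, ?_⟩
  rw [← filter_filter]
  calc _ ≤ ∑ i ∈ T, v i := h_rev
    _ ≤ harmonic #T * (v i₀ * #{j ∈ T | v i₀ ≤ v j}) := h_sum
    _ ≤ _ := by
      gcongr
      · exact mul_nonneg (hv i₀).le (Nat.cast_nonneg _)
      · exact harmonic_le_one_add_log_of_le hT.card_pos (card_le_univ T |>.trans (by simp))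

open scoped Classical in
/-- For the `UDP_min` problem with `m` consumers (positive valuations), uniform
pricing at some consumer valuation `q` achieves revenue at least
`OPT / (1 + ln m)`: for every price assignment `p`, there is a uniform price
`q` with `revenue(p) ≤ (1 + ln m) · q · #{i : B i ≠ ∅, q ≤ v i}`. -/
theorem stmt16 (n m : ℕ) (hm : 0 < m)
    (B : Fin m → Finset (Fin n)) (v : Fin m → ℝ) (hv : ∀ i, 0 < v i)
    (p : Fin n → ℝ) (hp : ∀ x, 0 < p x) :
    ∃ q ∈ Set.range v,
      (∑ i : Fin m, if ∃ x ∈ B i, p x ≤ v i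
          then sInf (p '' (B i : Set (Fin n))) else 0)
        ≤ (1 + Real.log m) *
          (q * ((Finset.univ.filter
            (fun i : Fin m => (B i).Nonempty ∧ q ≤ v i)).card : ℝ)) :=
  stmt16_general n m hm B v hv p
end

section
/- In the multi-period capacitated setting with a regular discrete choice model, the marginal monotonicity of the value function implies level monotonicity in capacity: if Δ𝒥_{t−1}(q−1) ≥ Δ𝒥_{t−1}(q) then ℓ*_t(q) ≤ ℓ*_t(q−1), i.e., the optimal revenue-ordered threshold index at time-to-go t is non-increasing as the remaining capacity q increases. More precisely, with δ_1 ≤ δ_2 and δ_1 + r_k ≥ 0, one has min 𝓛*(δ_2) ≤ min 𝓛*(δ_1). -/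
/-!
Adding `δ` to every revenue changes the expected revenue of an assortment `S` by `δ` times its
purchase probability `∑ x ∈ S, P x S`, which regularity makes monotone in `S`. So the expected
revenues have increasing differences in `(S, δ)`: once a larger assortment does at least as well
as a smaller one, it keeps doing so as `δ` grows. If the maximiser `ℓ₁` at `δ₁` were below
`ℓ₂`, its (larger) assortment would tie with that of `ℓ₂` at `δ₂`, contradicting the minimality
of `ℓ₂`.
-/

open Finset

section ShiftedRevenue

variable {α : Type*} (P : α → Finset α → ℝ) (r : α → ℝ)

def shiftedRevenue (S : Finset α) (δ : ℝ) : ℝ :=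
  ∑ x ∈ S, P x S * (r x + δ)

theorem shiftedRevenue_eq (S : Finset α) (δ : ℝ) :
    shiftedRevenue P r S δ = ∑ x ∈ S, P x S * r x + δ * ∑ x ∈ S, P x S := by
  rw [shiftedRevenue, mul_comm δ, sum_mul, ← sum_add_distrib]
  simp only [mul_add]

theorem shiftedRevenue_le_of_le_of_purchase_le {S T : Finset α}
    (hprob : ∑ x ∈ T, P x T ≤ ∑ x ∈ S, P x S) {δ₁ δ₂ : ℝ} (hδ : δ₁ ≤ δ₂)
    (h : shiftedRevenue P r T δ₁ ≤ shiftedRevenue P r S δ₁) :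
    shiftedRevenue P r T δ₂ ≤ shiftedRevenue P r S δ₂ := by
  simp only [shiftedRevenue_eq] at h ⊢
  nlinarith [mul_nonneg (sub_nonneg.mpr hδ) (sub_nonneg.mpr hprob)]

end ShiftedRevenue

open scoped Classical in
theorem stmt17_general {α : Type*} [Fintype α]
    (P : α → Finset α → ℝ) (r : α → ℝ)
    (h_reg0 : ∀ S S' : Finset α, S ⊆ S' →
      1 - ∑ x ∈ S', P x S' ≤ 1 - ∑ x ∈ S, P x S)
    (k : ℕ) (rv : ℕ → ℝ)
    (hrvmono : ∀ i j, 1 ≤ i → i < j → j ≤ k → rv i < rv j)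
    (δ₁ δ₂ : ℝ) (hδ : δ₁ ≤ δ₂)
    (g : ℝ → ℕ → ℝ)
    (hg : ∀ (δ : ℝ) (ℓ : ℕ), g δ ℓ =
      ∑ x ∈ Finset.univ.filter (fun x => rv ℓ ≤ r x),
        P x (Finset.univ.filter (fun x => rv ℓ ≤ r x)) * (r x + δ))
    (ℓ₁ ℓ₂ : ℕ)
    (hℓ₁mem : ℓ₁ ∈ Finset.Icc 1 k) (hℓ₂mem : ℓ₂ ∈ Finset.Icc 1 k)
    (hℓ₁max : ∀ ℓ ∈ Finset.Icc 1 k, g δ₁ ℓ ≤ g δ₁ ℓ₁)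
    (hℓ₂max : ∀ ℓ ∈ Finset.Icc 1 k, g δ₂ ℓ ≤ g δ₂ ℓ₂)
    (hℓ₂min : ∀ ℓ ∈ Finset.Icc 1 k, g δ₂ ℓ = g δ₂ ℓ₂ → ℓ₂ ≤ ℓ) :
    ℓ₂ ≤ ℓ₁ := by
  by_contra! hlt
  have hrv : rv ℓ₁ < rv ℓ₂ :=
    hrvmono ℓ₁ ℓ₂ (mem_Icc.mp hℓ₁mem).1 hlt (mem_Icc.mp hℓ₂mem).2
  have hsub : univ.filter (fun x => rv ℓ₂ ≤ r x) ⊆ univ.filter (fun x => rv ℓ₁ ≤ r x) :=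
    monotone_filter_right _ fun _ _ hx => hrv.le.trans hx
  have hprob := h_reg0 _ _ hsub
  have htie : g δ₂ ℓ₁ = g δ₂ ℓ₂ := by
    refine le_antisymm (hℓ₂max ℓ₁ hℓ₁mem) ?_
    have h₁ := hℓ₁max ℓ₂ hℓ₂mem
    rw [hg, hg] at h₁ ⊢
    exact shiftedRevenue_le_of_le_of_purchase_le P r (by linarith) hδ h₁
  exact (hℓ₂min ℓ₁ hℓ₁mem htie).not_gt hlt

open scoped Classical in
/-- Multi-period monotonicity lemma: for a regular discrete choice model with
distinct revenues `rv 1 < ... < rv k`, let `g δ ℓ` be the expected revenue of the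
revenue-ordered assortment `{x : rv ℓ ≤ r x}` when `δ` is added to all revenues.
If `δ₁ ≤ δ₂` with `δ₁ + rv k ≥ 0`, and `ℓ₁` (resp. `ℓ₂`) is the minimum maximiser
of `g δ₁` (resp. `g δ₂`) over `[k]`, then `ℓ₂ ≤ ℓ₁`. -/
theorem stmt17 {α : Type*} [Fintype α] [DecidableEq α]
    (P : α → Finset α → ℝ) (r : α → ℝ)
    (hr : ∀ x, 0 < r x)
    (h_nonneg : ∀ (x : α) (S : Finset α), 0 ≤ P x S)
    (h_vanish : ∀ (x : α) (S : Finset α), x ∉ S → P x S = 0)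
    (h_sum : ∀ S : Finset α, ∑ x ∈ S, P x S ≤ 1)
    (h_reg : ∀ S S' : Finset α, S ⊆ S' → ∀ x ∈ S, P x S' ≤ P x S)
    (h_reg0 : ∀ S S' : Finset α, S ⊆ S' →
      1 - ∑ x ∈ S', P x S' ≤ 1 - ∑ x ∈ S, P x S)
    (k : ℕ) (hk : 1 ≤ k) (rv : ℕ → ℝ)
    (hrvmono : ∀ i j, 1 ≤ i → i < j → j ≤ k → rv i < rv j)
    (hvals : Finset.univ.image r = (Finset.Icc 1 k).image rv)
    (δ₁ δ₂ : ℝ) (hδ : δ₁ ≤ δ₂) (hδ₁ : 0 ≤ δ₁ + rv k)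
    (g : ℝ → ℕ → ℝ)
    (hg : ∀ (δ : ℝ) (ℓ : ℕ), g δ ℓ =
      ∑ x ∈ Finset.univ.filter (fun x => rv ℓ ≤ r x),
        P x (Finset.univ.filter (fun x => rv ℓ ≤ r x)) * (r x + δ))
    (ℓ₁ ℓ₂ : ℕ)
    (hℓ₁mem : ℓ₁ ∈ Finset.Icc 1 k) (hℓ₂mem : ℓ₂ ∈ Finset.Icc 1 k)
    (hℓ₁max : ∀ ℓ ∈ Finset.Icc 1 k, g δ₁ ℓ ≤ g δ₁ ℓ₁)
    (hℓ₁min : ∀ ℓ ∈ Finset.Icc 1 k, g δ₁ ℓ = g δ₁ ℓ₁ → ℓ₁ ≤ ℓ)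
    (hℓ₂max : ∀ ℓ ∈ Finset.Icc 1 k, g δ₂ ℓ ≤ g δ₂ ℓ₂)
    (hℓ₂min : ∀ ℓ ∈ Finset.Icc 1 k, g δ₂ ℓ = g δ₂ ℓ₂ → ℓ₂ ≤ ℓ) :
    ℓ₂ ≤ ℓ₁ :=
  stmt17_general P r h_reg0 k rv hrvmono δ₁ δ₂ hδ g hg ℓ₁ ℓ₂ hℓ₁mem hℓ₂mem hℓ₁max hℓ₂max hℓ₂min
end
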